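/- arXiv:0902.4199 — 2 statements merged into one kernel-verified Lean document; each statement's English description precedes it below -/
import Mathlib

section
/- Let G be a locally compact Hausdorff groupoid with open range and source maps and let U ⊆ G^(0) be a full open subset, i.e. G_U ∘ G^U = G (every γ ∈ G can be written γ = γ₁γ₂ with s(γ₁) = r(γ₂) ∈ U). Then G_U^U := r⁻¹(U) ∩ s⁻¹(U), with the restricted operations, is a locally compact Hausdorff groupoid with open range and source maps, and G^U := r⁻¹(U), equipped with the left G_U^U-action and the right G-action given by multiplication, is a G_U^U-G-equivalence. -/
/-! ## Topological groupoids, actions, equivalences -/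

universe u v w x y z

/-- A topological groupoid structure on a space `G` of morphisms over a space `O` of objects.
The multiplication is a total function which is only meaningful on composable pairs
(pairs `(γ, γ')` with `s γ = r γ'`). -/
structure TopGroupoid (G : Type u) (O : Type v)
    [TopologicalSpace G] [TopologicalSpace O] where
  r : G → O
  s : G → O
  unit : O → G
  mul : G → G → G
  inv : G → G
  r_unit : ∀ x, r (unit x) = x
  s_unit : ∀ x, s (unit x) = x
  r_mul : ∀ γ γ', s γ = r γ' → r (mul γ γ') = r γ
  s_mul : ∀ γ γ', s γ = r γ' → s (mul γ γ') = s γ'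
  mul_assoc : ∀ γ₁ γ₂ γ₃, s γ₁ = r γ₂ → s γ₂ = r γ₃ →
    mul (mul γ₁ γ₂) γ₃ = mul γ₁ (mul γ₂ γ₃)
  unit_mul : ∀ γ, mul (unit (r γ)) γ = γ
  mul_unit : ∀ γ, mul γ (unit (s γ)) = γ
  r_inv : ∀ γ, r (inv γ) = s γ
  s_inv : ∀ γ, s (inv γ) = r γ
  mul_inv : ∀ γ, mul γ (inv γ) = unit (r γ)
  inv_mul : ∀ γ, mul (inv γ) γ = unit (s γ)
  continuous_r : Continuous r
  continuous_s : Continuous s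
  continuous_unit : Continuous unit
  continuous_inv : Continuous inv
  continuousOn_mul : ContinuousOn (fun p : G × G => mul p.1 p.2) {p | s p.1 = r p.2}

/-- A groupoid "with open range and source maps". -/
def TopGroupoid.OpenMaps {G : Type u} {O : Type v} [TopologicalSpace G] [TopologicalSpace O]
    (𝒢 : TopGroupoid G O) : Prop :=
  IsOpenMap 𝒢.r ∧ IsOpenMap 𝒢.s

/-- A "locally compact Hausdorff groupoid" is a topological groupoid whose total space (and
hence unit space) is locally compact Hausdorff; we record this as a property. -/
def TopGroupoid.IsLCH {G : Type u} {O : Type v} [TopologicalSpace G] [TopologicalSpace O]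
    (_ : TopGroupoid G O) : Prop :=
  LocallyCompactSpace G ∧ T2Space G ∧ LocallyCompactSpace O ∧ T2Space O

/-- A continuous left action of a topological groupoid on a space `Ω` with anchor map `ρ`.
Again the action map is total but only meaningful on composable pairs. -/
structure GLeftAction {G : Type u} {O : Type v} [TopologicalSpace G] [TopologicalSpace O]
    (𝒢 : TopGroupoid G O) (Ω : Type w) [TopologicalSpace Ω] where
  ρ : Ω → O
  act : G → Ω → Ω
  continuous_ρ : Continuous ρ
  ρ_act : ∀ γ ω, 𝒢.s γ = ρ ω → ρ (act γ ω) = 𝒢.r γ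
  unit_act : ∀ ω, act (𝒢.unit (ρ ω)) ω = ω
  mul_act : ∀ γ γ' ω, 𝒢.s γ = 𝒢.r γ' → 𝒢.s γ' = ρ ω →
    act (𝒢.mul γ γ') ω = act γ (act γ' ω)
  continuousOn_act : ContinuousOn (fun p : G × Ω => act p.1 p.2) {p | 𝒢.s p.1 = ρ p.2}

/-- A continuous right action of a topological groupoid on a space `Ω` with anchor map `σ`. -/
structure GRightAction {H : Type u} {P : Type v} [TopologicalSpace H] [TopologicalSpace P]
    (ℋ : TopGroupoid H P) (Ω : Type w) [TopologicalSpace Ω] where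
  σ : Ω → P
  act : Ω → H → Ω
  continuous_σ : Continuous σ
  σ_act : ∀ ω η, σ ω = ℋ.r η → σ (act ω η) = ℋ.s η
  act_unit : ∀ ω, act ω (ℋ.unit (σ ω)) = ω
  act_mul : ∀ ω η η', σ ω = ℋ.r η → ℋ.s η = ℋ.r η' →
    act ω (ℋ.mul η η') = act (act ω η) η'
  continuousOn_act : ContinuousOn (fun p : Ω × H => act p.1 p.2) {p | σ p.1 = ℋ.r p.2}

namespace GLeftAction

variable {G : Type u} {O : Type v} [TopologicalSpace G] [TopologicalSpace O]
variable {𝒢 : TopGroupoid G O} {Ω : Type w} [TopologicalSpace Ω]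

/-- Freeness of a left groupoid action. -/
def Free (a : GLeftAction 𝒢 Ω) : Prop :=
  ∀ γ ω, 𝒢.s γ = a.ρ ω → a.act γ ω = ω → γ = 𝒢.unit (a.ρ ω)

/-- Properness of a left groupoid action: the map `(γ, ω) ↦ (γ·ω, ω)` on the space of
composable pairs is a proper map. -/
def Proper (a : GLeftAction 𝒢 Ω) : Prop :=
  IsProperMap (fun p : {p : G × Ω // 𝒢.s p.1 = a.ρ p.2} =>
    ((a.act p.1.1 p.1.2, p.1.2) : Ω × Ω))

end GLeftAction

namespace GRightAction

variable {H : Type u} {P : Type v} [TopologicalSpace H] [TopologicalSpace P]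
variable {ℋ : TopGroupoid H P} {Ω : Type w} [TopologicalSpace Ω]

/-- Freeness of a right groupoid action. -/
def Free (a : GRightAction ℋ Ω) : Prop :=
  ∀ ω η, a.σ ω = ℋ.r η → a.act ω η = ω → η = ℋ.unit (a.σ ω)

/-- Properness of a right groupoid action. -/
def Proper (a : GRightAction ℋ Ω) : Prop :=
  IsProperMap (fun p : {p : Ω × H // a.σ p.1 = ℋ.r p.2} =>
    ((a.act p.1.1 p.1.2, p.1.1) : Ω × Ω))

end GRightAction

/-- A `𝒢`-`ℋ`-bimodule: commuting continuous left `𝒢`- and right `ℋ`-actions on `Ω`. -/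
structure GBimodule {G : Type u} {O : Type v} {H : Type w} {P : Type x}
    [TopologicalSpace G] [TopologicalSpace O] [TopologicalSpace H] [TopologicalSpace P]
    (𝒢 : TopGroupoid G O) (ℋ : TopGroupoid H P) (Ω : Type y) [TopologicalSpace Ω] where
  left : GLeftAction 𝒢 Ω
  right : GRightAction ℋ Ω
  σ_actl : ∀ γ ω, 𝒢.s γ = left.ρ ω → right.σ (left.act γ ω) = right.σ ω
  ρ_actr : ∀ ω η, right.σ ω = ℋ.r η → left.ρ (right.act ω η) = left.ρ ω
  commute : ∀ γ ω η, 𝒢.s γ = left.ρ ω → right.σ ω = ℋ.r η →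
    left.act γ (right.act ω η) = right.act (left.act γ ω) η

/-- A graph ("generalised morphism datum") from `𝒢` to `ℋ`: a bimodule whose left anchor map
`ρ` is a principal fibration with structure groupoid `ℋ`. -/
structure IsGraph {G : Type u} {O : Type v} {H : Type w} {P : Type x}
    [TopologicalSpace G] [TopologicalSpace O] [TopologicalSpace H] [TopologicalSpace P]
    {𝒢 : TopGroupoid G O} {ℋ : TopGroupoid H P} {Ω : Type y} [TopologicalSpace Ω]
    (M : GBimodule 𝒢 ℋ Ω) : Prop where
  free_right : M.right.Free
  proper_right : M.right.Proper
  ρ_open : IsOpenMap M.left.ρ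
  ρ_surj : Function.Surjective M.left.ρ
  fibre_trans : ∀ ω ω', M.left.ρ ω = M.left.ρ ω' →
    ∃ η, M.right.σ ω = ℋ.r η ∧ M.right.act ω η = ω'

/-- A `𝒢`-`ℋ`-equivalence bimodule. -/
structure IsEquivalence {G : Type u} {O : Type v} {H : Type w} {P : Type x}
    [TopologicalSpace G] [TopologicalSpace O] [TopologicalSpace H] [TopologicalSpace P]
    {𝒢 : TopGroupoid G O} {ℋ : TopGroupoid H P} {Ω : Type y} [TopologicalSpace Ω]
    (M : GBimodule 𝒢 ℋ Ω) : Prop where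
  free_left : M.left.Free
  proper_left : M.left.Proper
  free_right : M.right.Free
  proper_right : M.right.Proper
  ρ_open : IsOpenMap M.left.ρ
  ρ_surj : Function.Surjective M.left.ρ
  /-- the fibres of `ρ` are exactly the `ℋ`-orbits, i.e. `ρ` induces a homeomorphism
  `Ω/ℋ ≅ 𝒢⁽⁰⁾` (openness + surjectivity + this condition). -/
  ρ_fibres : ∀ ω ω', M.left.ρ ω = M.left.ρ ω' ↔
    ∃ η, M.right.σ ω = ℋ.r η ∧ M.right.act ω η = ω'
  σ_open : IsOpenMap M.right.σ
  σ_surj : Function.Surjective M.right.σ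
  /-- the fibres of `σ` are exactly the `𝒢`-orbits, i.e. `σ` induces a homeomorphism
  `𝒢\Ω ≅ ℋ⁽⁰⁾`. -/
  σ_fibres : ∀ ω ω', M.right.σ ω = M.right.σ ω' ↔
    ∃ γ, 𝒢.s γ = M.left.ρ ω ∧ M.left.act γ ω = ω'

/-- A strict morphism of topological groupoids (a continuous functor). -/
structure StrictMorphism {G : Type u} {O : Type v} {H : Type w} {P : Type x}
    [TopologicalSpace G] [TopologicalSpace O] [TopologicalSpace H] [TopologicalSpace P]
    (𝒢 : TopGroupoid G O) (ℋ : TopGroupoid H P) where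
  toFun : G → H
  obj : O → P
  continuous_toFun : Continuous toFun
  continuous_obj : Continuous obj
  map_unit : ∀ x, toFun (𝒢.unit x) = ℋ.unit (obj x)
  map_r : ∀ γ, ℋ.r (toFun γ) = obj (𝒢.r γ)
  map_s : ∀ γ, ℋ.s (toFun γ) = obj (𝒢.s γ)
  map_mul : ∀ γ γ', 𝒢.s γ = 𝒢.r γ' → toFun (𝒢.mul γ γ') = ℋ.mul (toFun γ) (toFun γ')

/-- The carrier of the pullback groupoid `p*(𝒢)` along `p : Y → 𝒢⁽⁰⁾`. -/
def PullbackCarrier {G : Type u} {O : Type v} [TopologicalSpace G] [TopologicalSpace O]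
    (𝒢 : TopGroupoid G O) {Y : Type w} [TopologicalSpace Y] (p : Y → O) : Type (max u w) :=
  {t : Y × G × Y // p t.1 = 𝒢.r t.2.1 ∧ 𝒢.s t.2.1 = p t.2.2}

instance {G : Type u} {O : Type v} [TopologicalSpace G] [TopologicalSpace O]
    (𝒢 : TopGroupoid G O) {Y : Type w} [TopologicalSpace Y] (p : Y → O) :
    TopologicalSpace (PullbackCarrier 𝒢 p) :=
  instTopologicalSpaceSubtype

/-- A topological groupoid structure on `PullbackCarrier 𝒢 p` realises the pullback groupoid
`p*(𝒢)` if its structure maps are the canonical ones. -/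
structure IsPullbackGroupoid {G : Type u} {O : Type v} [TopologicalSpace G] [TopologicalSpace O]
    (𝒢 : TopGroupoid G O) {Y : Type w} [TopologicalSpace Y] (p : Y → O)
    (PB : TopGroupoid (PullbackCarrier 𝒢 p) Y) : Prop where
  r_eq : ∀ t : PullbackCarrier 𝒢 p, PB.r t = t.1.1
  s_eq : ∀ t : PullbackCarrier 𝒢 p, PB.s t = t.1.2.2
  unit_eq : ∀ y : Y, (PB.unit y).1 = (y, 𝒢.unit (p y), y)
  mul_eq : ∀ t t' : PullbackCarrier 𝒢 p, t.1.2.2 = t'.1.1 →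
    (PB.mul t t').1 = (t.1.1, 𝒢.mul t.1.2.1 t'.1.2.1, t'.1.2.2)
  inv_eq : ∀ t : PullbackCarrier 𝒢 p, (PB.inv t).1 = (t.1.2.2, 𝒢.inv t.1.2.1, t.1.1)

/-! Everything about `G_U^U` is inherited from `𝒢` by restriction, and since `U` is open so are
`G_U^U` and `G^U = r⁻¹(U)`; hence `G_U^U` is locally compact and the restricted range, source
and anchor maps stay open. Both actions on `G^U` are multiplication, so they are free by
cancellation, and their graph maps `(γ, ω) ↦ (γ ω, ω)` and `(ω, η) ↦ (ω η, ω)` are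
homeomorphisms, with inverses `(ω', ω) ↦ (ω' ω⁻¹, ω)` and `(ω', ω) ↦ (ω, ω⁻¹ ω')`, onto the
closed sets of pairs in `G^U` with equal sources, resp. equal ranges; so both actions are
proper. The same inverses show that the fibres of the anchor maps are the orbits. Finally,
fullness of `U` says that every orbit of `𝒢` meets `U`, which is surjectivity of
`s : G^U → 𝒢⁽⁰⁾`. -/

section Statement1

variable {G : Type u} {O : Type v}
variable [TopologicalSpace G] [TopologicalSpace O]

namespace TopGroupoid

variable (𝒢 : TopGroupoid G O)

theorem mul_inv_cancel_right {γ ω : G} (h : 𝒢.s γ = 𝒢.r ω) :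
    𝒢.mul (𝒢.mul γ ω) (𝒢.inv ω) = γ := by
  rw [𝒢.mul_assoc _ _ _ h (𝒢.r_inv ω).symm, 𝒢.mul_inv, ← h, 𝒢.mul_unit]

theorem inv_mul_cancel_left {ω η : G} (h : 𝒢.s ω = 𝒢.r η) :
    𝒢.mul (𝒢.inv ω) (𝒢.mul ω η) = η := by
  rw [← 𝒢.mul_assoc _ _ _ (𝒢.s_inv ω) h, 𝒢.inv_mul, h, 𝒢.unit_mul]

theorem inv_mul_cancel_right {γ ω : G} (h : 𝒢.s γ = 𝒢.s ω) :
    𝒢.mul (𝒢.mul γ (𝒢.inv ω)) ω = γ := by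
  rw [𝒢.mul_assoc _ _ _ (h.trans (𝒢.r_inv ω).symm) (𝒢.s_inv ω), 𝒢.inv_mul, ← h, 𝒢.mul_unit]

theorem mul_inv_cancel_left {ω η : G} (h : 𝒢.r ω = 𝒢.r η) :
    𝒢.mul ω (𝒢.mul (𝒢.inv ω) η) = η := by
  rw [← 𝒢.mul_assoc _ _ _ (𝒢.r_inv ω).symm ((𝒢.s_inv ω).trans h), 𝒢.mul_inv, h, 𝒢.unit_mul]

theorem s_mul_inv {γ ω : G} (h : 𝒢.s γ = 𝒢.s ω) : 𝒢.s (𝒢.mul γ (𝒢.inv ω)) = 𝒢.r ω := by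
  rw [𝒢.s_mul _ _ (h.trans (𝒢.r_inv ω).symm), 𝒢.s_inv]

theorem r_mul_inv {γ ω : G} (h : 𝒢.s γ = 𝒢.s ω) : 𝒢.r (𝒢.mul γ (𝒢.inv ω)) = 𝒢.r γ :=
  𝒢.r_mul _ _ (h.trans (𝒢.r_inv ω).symm)

theorem r_inv_mul {ω η : G} (h : 𝒢.r ω = 𝒢.r η) : 𝒢.r (𝒢.mul (𝒢.inv ω) η) = 𝒢.s ω := by
  rw [𝒢.r_mul _ _ ((𝒢.s_inv ω).trans h), 𝒢.r_inv]

theorem eq_unit_of_mul_eq_right {γ ω : G} (h : 𝒢.s γ = 𝒢.r ω) (hγω : 𝒢.mul γ ω = ω) :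
    γ = 𝒢.unit (𝒢.r ω) := by
  rw [← 𝒢.mul_inv_cancel_right h, hγω, 𝒢.mul_inv]

theorem eq_unit_of_mul_eq_left {ω η : G} (h : 𝒢.s ω = 𝒢.r η) (hωη : 𝒢.mul ω η = ω) :
    η = 𝒢.unit (𝒢.s ω) := by
  rw [← 𝒢.inv_mul_cancel_left h, hωη, 𝒢.inv_mul]

theorem continuousOn_mul_comp {X : Type*} [TopologicalSpace X] {f g : X → G}
    (hf : Continuous f) (hg : Continuous g) :
    ContinuousOn (fun x => 𝒢.mul (f x) (g x)) {x | 𝒢.s (f x) = 𝒢.r (g x)} :=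
  𝒢.continuousOn_mul.comp (hf.prodMk hg).continuousOn fun _ hx => hx

theorem continuous_mul_comp {X : Type*} [TopologicalSpace X] {f g : X → G}
    (hf : Continuous f) (hg : Continuous g) (h : ∀ x, 𝒢.s (f x) = 𝒢.r (g x)) :
    Continuous fun x => 𝒢.mul (f x) (g x) :=
  𝒢.continuousOn_mul.comp_continuous (hf.prodMk hg) h

variable (U : Set O)

theorem exists_r_mem_and_s_eq_of_full
    (hfull : ∀ γ : G, ∃ γ₁ γ₂ : G, 𝒢.s γ₁ = 𝒢.r γ₂ ∧ 𝒢.s γ₁ ∈ U ∧ 𝒢.mul γ₁ γ₂ = γ) (x : O) :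
    ∃ γ, 𝒢.r γ ∈ U ∧ 𝒢.s γ = x := by
  obtain ⟨γ₁, γ₂, h, hU, hmul⟩ := hfull (𝒢.unit x)
  exact ⟨γ₂, h ▸ hU, by rw [← 𝒢.s_mul _ _ h, hmul, 𝒢.s_unit]⟩

theorem r_mem_and_s_mem_mul_inv {γ ω : G} (hγ : 𝒢.r γ ∈ U) (hω : 𝒢.r ω ∈ U)
    (h : 𝒢.s γ = 𝒢.s ω) : 𝒢.r (𝒢.mul γ (𝒢.inv ω)) ∈ U ∧ 𝒢.s (𝒢.mul γ (𝒢.inv ω)) ∈ U :=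
  ⟨(𝒢.r_mul_inv h).symm ▸ hγ, (𝒢.s_mul_inv h).symm ▸ hω⟩

theorem isOpen_setOf_r_mem_and_s_mem (hU : IsOpen U) : IsOpen {γ | 𝒢.r γ ∈ U ∧ 𝒢.s γ ∈ U} :=
  (hU.preimage 𝒢.continuous_r).inter (hU.preimage 𝒢.continuous_s)

open Classical in
/-- Multiplication of `G_U^U`, with junk value `γ` on non-composable pairs. -/
noncomputable def restrictMul (γ γ' : {γ : G // 𝒢.r γ ∈ U ∧ 𝒢.s γ ∈ U}) :
    {γ : G // 𝒢.r γ ∈ U ∧ 𝒢.s γ ∈ U} :=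
  if h : 𝒢.s γ.1 = 𝒢.r γ'.1 then
    ⟨𝒢.mul γ.1 γ'.1, by rw [𝒢.r_mul _ _ h, 𝒢.s_mul _ _ h]; exact ⟨γ.2.1, γ'.2.2⟩⟩
  else γ

variable {𝒢 U} in
theorem coe_restrictMul {γ γ' : {γ : G // 𝒢.r γ ∈ U ∧ 𝒢.s γ ∈ U}} (h : 𝒢.s γ.1 = 𝒢.r γ'.1) :
    (𝒢.restrictMul U γ γ').1 = 𝒢.mul γ.1 γ'.1 := by
  rw [restrictMul, dif_pos h]

/-- The reduction `G_U^U` of `𝒢` to `U`. -/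
noncomputable def restrict : TopGroupoid {γ : G // 𝒢.r γ ∈ U ∧ 𝒢.s γ ∈ U} {x : O // x ∈ U} where
  r γ := ⟨𝒢.r γ.1, γ.2.1⟩
  s γ := ⟨𝒢.s γ.1, γ.2.2⟩
  unit x := ⟨𝒢.unit x.1, by rw [𝒢.r_unit, 𝒢.s_unit]; exact ⟨x.2, x.2⟩⟩
  mul := 𝒢.restrictMul U
  inv γ := ⟨𝒢.inv γ.1, by rw [𝒢.r_inv, 𝒢.s_inv]; exact ⟨γ.2.2, γ.2.1⟩⟩
  r_unit x := Subtype.ext (𝒢.r_unit x.1)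
  s_unit x := Subtype.ext (𝒢.s_unit x.1)
  r_mul γ γ' h := by
    have h := congrArg Subtype.val h
    exact Subtype.ext ((congrArg 𝒢.r (coe_restrictMul h)).trans (𝒢.r_mul _ _ h))
  s_mul γ γ' h := by
    have h := congrArg Subtype.val h
    exact Subtype.ext ((congrArg 𝒢.s (coe_restrictMul h)).trans (𝒢.s_mul _ _ h))
  mul_assoc γ₁ γ₂ γ₃ h₁₂ h₂₃ := by
    have h₁₂ : 𝒢.s γ₁.1 = 𝒢.r γ₂.1 := congrArg Subtype.val h₁₂
    have h₂₃ : 𝒢.s γ₂.1 = 𝒢.r γ₃.1 := congrArg Subtype.val h₂₃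
    have h₁₂₃ : 𝒢.s (𝒢.restrictMul U γ₁ γ₂).1 = 𝒢.r γ₃.1 := by
      rw [coe_restrictMul h₁₂, 𝒢.s_mul _ _ h₁₂, h₂₃]
    have h₁₂₃' : 𝒢.s γ₁.1 = 𝒢.r (𝒢.restrictMul U γ₂ γ₃).1 := by
      rw [coe_restrictMul h₂₃, 𝒢.r_mul _ _ h₂₃, h₁₂]
    apply Subtype.ext
    rw [coe_restrictMul h₁₂₃, coe_restrictMul h₁₂₃', coe_restrictMul h₁₂, coe_restrictMul h₂₃,
      𝒢.mul_assoc _ _ _ h₁₂ h₂₃]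
  unit_mul γ := Subtype.ext ((coe_restrictMul (𝒢.s_unit _)).trans (𝒢.unit_mul γ.1))
  mul_unit γ := Subtype.ext ((coe_restrictMul (𝒢.r_unit _).symm).trans (𝒢.mul_unit γ.1))
  r_inv γ := Subtype.ext (𝒢.r_inv γ.1)
  s_inv γ := Subtype.ext (𝒢.s_inv γ.1)
  mul_inv γ := Subtype.ext ((coe_restrictMul (𝒢.r_inv _).symm).trans (𝒢.mul_inv γ.1))
  inv_mul γ := Subtype.ext ((coe_restrictMul (𝒢.s_inv _)).trans (𝒢.inv_mul γ.1))
  continuous_r := (𝒢.continuous_r.comp continuous_subtype_val).subtype_mk _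
  continuous_s := (𝒢.continuous_s.comp continuous_subtype_val).subtype_mk _
  continuous_unit := by exact (𝒢.continuous_unit.comp continuous_subtype_val).subtype_mk _
  continuous_inv := by exact (𝒢.continuous_inv.comp continuous_subtype_val).subtype_mk _
  continuousOn_mul := by
    refine Topology.IsInducing.subtypeVal.continuousOn_iff.2 <|
      ((𝒢.continuousOn_mul_comp (continuous_subtype_val.comp continuous_fst)
        (continuous_subtype_val.comp continuous_snd)).mono
        fun _ hp => by exact congrArg Subtype.val hp).congr fun _ hp => ?_
    exact coe_restrictMul (congrArg Subtype.val hp)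

theorem openMaps_restrict (h𝒢 : 𝒢.OpenMaps) (hU : IsOpen U) : (𝒢.restrict U).OpenMaps :=
  ⟨(h𝒢.1.comp (𝒢.isOpen_setOf_r_mem_and_s_mem U hU).isOpenMap_subtype_val).subtype_mk _,
    (h𝒢.2.comp (𝒢.isOpen_setOf_r_mem_and_s_mem U hU).isOpenMap_subtype_val).subtype_mk _⟩

open Classical in
/-- Left multiplication of `G_U^U` on `G^U`, with junk value `ω` on non-composable pairs. -/
noncomputable def restrictLeftMul (γ : {γ : G // 𝒢.r γ ∈ U ∧ 𝒢.s γ ∈ U})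
    (ω : {γ : G // 𝒢.r γ ∈ U}) : {γ : G // 𝒢.r γ ∈ U} :=
  if h : 𝒢.s γ.1 = 𝒢.r ω.1 then ⟨𝒢.mul γ.1 ω.1, by rw [𝒢.r_mul _ _ h]; exact γ.2.1⟩ else ω

variable {𝒢 U} in
theorem coe_restrictLeftMul {γ : {γ : G // 𝒢.r γ ∈ U ∧ 𝒢.s γ ∈ U}} {ω : {γ : G // 𝒢.r γ ∈ U}}
    (h : 𝒢.s γ.1 = 𝒢.r ω.1) : (𝒢.restrictLeftMul U γ ω).1 = 𝒢.mul γ.1 ω.1 := by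
  rw [restrictLeftMul, dif_pos h]

open Classical in
/-- Right multiplication of `𝒢` on `G^U`, with junk value `ω` on non-composable pairs. -/
noncomputable def restrictRightMul (ω : {γ : G // 𝒢.r γ ∈ U}) (η : G) : {γ : G // 𝒢.r γ ∈ U} :=
  if h : 𝒢.s ω.1 = 𝒢.r η then ⟨𝒢.mul ω.1 η, by rw [𝒢.r_mul _ _ h]; exact ω.2⟩ else ω

variable {𝒢 U} in
theorem coe_restrictRightMul {ω : {γ : G // 𝒢.r γ ∈ U}} {η : G} (h : 𝒢.s ω.1 = 𝒢.r η) :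
    (𝒢.restrictRightMul U ω η).1 = 𝒢.mul ω.1 η := by
  rw [restrictRightMul, dif_pos h]

noncomputable def restrictLeftAction : GLeftAction (𝒢.restrict U) {γ : G // 𝒢.r γ ∈ U} where
  ρ ω := ⟨𝒢.r ω.1, ω.2⟩
  act := 𝒢.restrictLeftMul U
  continuous_ρ := (𝒢.continuous_r.comp continuous_subtype_val).subtype_mk _
  ρ_act γ ω h := by
    have h := congrArg Subtype.val h
    exact Subtype.ext ((congrArg 𝒢.r (coe_restrictLeftMul h)).trans (𝒢.r_mul _ _ h))
  unit_act ω := Subtype.ext ((coe_restrictLeftMul (𝒢.s_unit _)).trans (𝒢.unit_mul ω.1))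
  mul_act γ γ' ω h₁ h₂ := by
    have h₁ : 𝒢.s γ.1 = 𝒢.r γ'.1 := congrArg Subtype.val h₁
    have h₂ : 𝒢.s γ'.1 = 𝒢.r ω.1 := congrArg Subtype.val h₂
    have h₁₂ : 𝒢.s (𝒢.restrictMul U γ γ').1 = 𝒢.r ω.1 := by
      rw [coe_restrictMul h₁, 𝒢.s_mul _ _ h₁, h₂]
    have h₁₂' : 𝒢.s γ.1 = 𝒢.r (𝒢.restrictLeftMul U γ' ω).1 := by
      rw [coe_restrictLeftMul h₂, 𝒢.r_mul _ _ h₂, h₁]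
    apply Subtype.ext
    change (𝒢.restrictLeftMul U (𝒢.restrictMul U γ γ') ω).1 = _
    rw [coe_restrictLeftMul h₁₂, coe_restrictLeftMul h₁₂', coe_restrictMul h₁,
      coe_restrictLeftMul h₂, 𝒢.mul_assoc _ _ _ h₁ h₂]
  continuousOn_act := by
    refine Topology.IsInducing.subtypeVal.continuousOn_iff.2 <|
      ((𝒢.continuousOn_mul_comp (continuous_subtype_val.comp continuous_fst)
        (continuous_subtype_val.comp continuous_snd)).mono
        fun _ hp => by exact congrArg Subtype.val hp).congr fun _ hp => ?_
    exact coe_restrictLeftMul (congrArg Subtype.val hp)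

noncomputable def restrictRightAction : GRightAction 𝒢 {γ : G // 𝒢.r γ ∈ U} where
  σ ω := 𝒢.s ω.1
  act := 𝒢.restrictRightMul U
  continuous_σ := 𝒢.continuous_s.comp continuous_subtype_val
  σ_act ω η h := (congrArg 𝒢.s (coe_restrictRightMul h)).trans (𝒢.s_mul _ _ h)
  act_unit ω := Subtype.ext ((coe_restrictRightMul (𝒢.r_unit _).symm).trans (𝒢.mul_unit ω.1))
  act_mul ω η η' h₁ h₂ := by
    have h₁₂ : 𝒢.s ω.1 = 𝒢.r (𝒢.mul η η') := by rw [𝒢.r_mul _ _ h₂, h₁]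
    have h₁₂' : 𝒢.s (𝒢.restrictRightMul U ω η).1 = 𝒢.r η' := by
      rw [coe_restrictRightMul h₁, 𝒢.s_mul _ _ h₁, h₂]
    apply Subtype.ext
    rw [coe_restrictRightMul h₁₂, coe_restrictRightMul h₁₂', coe_restrictRightMul h₁,
      𝒢.mul_assoc _ _ _ h₁ h₂]
  continuousOn_act :=
    Topology.IsInducing.subtypeVal.continuousOn_iff.2 <|
      (𝒢.continuousOn_mul_comp (continuous_subtype_val.comp continuous_fst)
        continuous_snd).congr fun _ hp => coe_restrictRightMul hp

noncomputable def restrictBimodule : GBimodule (𝒢.restrict U) 𝒢 {γ : G // 𝒢.r γ ∈ U} where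
  left := 𝒢.restrictLeftAction U
  right := 𝒢.restrictRightAction U
  σ_actl γ ω h := by
    have h := congrArg Subtype.val h
    exact (congrArg 𝒢.s (coe_restrictLeftMul h)).trans (𝒢.s_mul _ _ h)
  ρ_actr ω η h := Subtype.ext ((congrArg 𝒢.r (coe_restrictRightMul h)).trans (𝒢.r_mul _ _ h))
  commute γ ω η h₁ h₂ := by
    have h₁ : 𝒢.s γ.1 = 𝒢.r ω.1 := congrArg Subtype.val h₁
    have h₂ : 𝒢.s ω.1 = 𝒢.r η := h₂
    have h₁₂ : 𝒢.s γ.1 = 𝒢.r (𝒢.restrictRightMul U ω η).1 := by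
      rw [coe_restrictRightMul h₂, 𝒢.r_mul _ _ h₂, h₁]
    have h₁₂' : 𝒢.s (𝒢.restrictLeftMul U γ ω).1 = 𝒢.r η := by
      rw [coe_restrictLeftMul h₁, 𝒢.s_mul _ _ h₁, h₂]
    apply Subtype.ext
    change (𝒢.restrictLeftMul U γ (𝒢.restrictRightMul U ω η)).1 =
      (𝒢.restrictRightMul U (𝒢.restrictLeftMul U γ ω) η).1
    rw [coe_restrictLeftMul h₁₂, coe_restrictRightMul h₁₂', coe_restrictRightMul h₂,
      coe_restrictLeftMul h₁, 𝒢.mul_assoc _ _ _ h₁ h₂]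

theorem restrictLeftAction_free : (𝒢.restrictLeftAction U).Free := by
  intro γ ω h hγω
  have h : 𝒢.s γ.1 = 𝒢.r ω.1 := congrArg Subtype.val h
  exact Subtype.ext <| 𝒢.eq_unit_of_mul_eq_right h <|
    (coe_restrictLeftMul h).symm.trans (congrArg Subtype.val hγω)

theorem restrictRightAction_free : (𝒢.restrictRightAction U).Free := fun _ _ h hωη =>
  𝒢.eq_unit_of_mul_eq_left h <| (coe_restrictRightMul h).symm.trans (congrArg Subtype.val hωη)

noncomputable def restrictLeftActionGraphHomeomorph :
    {p : {γ : G // 𝒢.r γ ∈ U ∧ 𝒢.s γ ∈ U} × {γ : G // 𝒢.r γ ∈ U} //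
      (𝒢.restrict U).s p.1 = (𝒢.restrictLeftAction U).ρ p.2} ≃ₜ
    {q : {γ : G // 𝒢.r γ ∈ U} × {γ : G // 𝒢.r γ ∈ U} // 𝒢.s q.1.1 = 𝒢.s q.2.1} where
  toFun p := ⟨(𝒢.restrictLeftMul U p.1.1 p.1.2, p.1.2), (𝒢.restrictBimodule U).σ_actl _ _ p.2⟩
  invFun q := ⟨(⟨_, 𝒢.r_mem_and_s_mem_mul_inv U q.1.1.2 q.1.2.2 q.2⟩, q.1.2),
    Subtype.ext (𝒢.s_mul_inv q.2)⟩
  left_inv p := by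
    have h : 𝒢.s p.1.1.1 = 𝒢.r p.1.2.1 := congrArg Subtype.val p.2
    refine Subtype.ext (Prod.ext (Subtype.ext ?_) rfl)
    change 𝒢.mul (𝒢.restrictLeftMul U p.1.1 p.1.2).1 (𝒢.inv p.1.2.1) = p.1.1.1
    rw [coe_restrictLeftMul h, 𝒢.mul_inv_cancel_right h]
  right_inv q := Subtype.ext <| Prod.ext (Subtype.ext <|
    (coe_restrictLeftMul (𝒢.s_mul_inv q.2)).trans (𝒢.inv_mul_cancel_right q.2)) rfl
  continuous_toFun :=
    (((𝒢.restrictLeftAction U).continuousOn_act.comp_continuous continuous_subtype_val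
      Subtype.prop).prodMk (continuous_snd.comp continuous_subtype_val)).subtype_mk _
  continuous_invFun := by
    refine ((Continuous.subtype_mk ?_ _).prodMk
      (continuous_snd.comp continuous_subtype_val)).subtype_mk _
    exact 𝒢.continuous_mul_comp (continuous_subtype_val.comp (continuous_fst.comp
      continuous_subtype_val)) (𝒢.continuous_inv.comp (continuous_subtype_val.comp
      (continuous_snd.comp continuous_subtype_val))) fun q => q.2.trans (𝒢.r_inv _).symm

noncomputable def restrictRightActionGraphHomeomorph :
    {p : {γ : G // 𝒢.r γ ∈ U} × G // (𝒢.restrictRightAction U).σ p.1 = 𝒢.r p.2} ≃ₜ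
    {q : {γ : G // 𝒢.r γ ∈ U} × {γ : G // 𝒢.r γ ∈ U} // 𝒢.r q.1.1 = 𝒢.r q.2.1} where
  toFun p := ⟨(𝒢.restrictRightMul U p.1.1 p.1.2, p.1.1),
    congrArg Subtype.val ((𝒢.restrictBimodule U).ρ_actr _ _ p.2)⟩
  invFun q := ⟨(q.1.2, 𝒢.mul (𝒢.inv q.1.2.1) q.1.1.1), (𝒢.r_inv_mul q.2.symm).symm⟩
  left_inv p := Subtype.ext <| Prod.ext rfl <|
    (congrArg (𝒢.mul _) (coe_restrictRightMul p.2)).trans (𝒢.inv_mul_cancel_left p.2)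
  right_inv q := Subtype.ext <| Prod.ext (Subtype.ext <|
    (coe_restrictRightMul (𝒢.r_inv_mul q.2.symm).symm).trans
      (𝒢.mul_inv_cancel_left q.2.symm)) rfl
  continuous_toFun :=
    (((𝒢.restrictRightAction U).continuousOn_act.comp_continuous continuous_subtype_val
      Subtype.prop).prodMk (continuous_fst.comp continuous_subtype_val)).subtype_mk _
  continuous_invFun := by
    refine ((continuous_snd.comp continuous_subtype_val).prodMk ?_).subtype_mk _
    exact 𝒢.continuous_mul_comp (𝒢.continuous_inv.comp (continuous_subtype_val.comp
      (continuous_snd.comp continuous_subtype_val))) (continuous_subtype_val.comp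
      (continuous_fst.comp continuous_subtype_val)) fun q => (𝒢.s_inv _).trans q.2.symm

theorem restrictLeftAction_proper [T2Space O] : (𝒢.restrictLeftAction U).Proper := by
  have hC : IsClosed
      {q : {γ : G // 𝒢.r γ ∈ U} × {γ : G // 𝒢.r γ ∈ U} | 𝒢.s q.1.1 = 𝒢.s q.2.1} :=
    isClosed_eq (𝒢.continuous_s.comp (continuous_subtype_val.comp continuous_fst))
      (𝒢.continuous_s.comp (continuous_subtype_val.comp continuous_snd))
  exact (hC.isClosedEmbedding_subtypeVal.comp
    (𝒢.restrictLeftActionGraphHomeomorph U).isClosedEmbedding).isProperMap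

theorem restrictRightAction_proper [T2Space O] : (𝒢.restrictRightAction U).Proper := by
  have hC : IsClosed
      {q : {γ : G // 𝒢.r γ ∈ U} × {γ : G // 𝒢.r γ ∈ U} | 𝒢.r q.1.1 = 𝒢.r q.2.1} :=
    isClosed_eq (𝒢.continuous_r.comp (continuous_subtype_val.comp continuous_fst))
      (𝒢.continuous_r.comp (continuous_subtype_val.comp continuous_snd))
  exact (hC.isClosedEmbedding_subtypeVal.comp
    (𝒢.restrictRightActionGraphHomeomorph U).isClosedEmbedding).isProperMap

theorem restrictBimodule_ρ_eq_iff (ω ω' : {γ : G // 𝒢.r γ ∈ U}) :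
    (𝒢.restrictBimodule U).left.ρ ω = (𝒢.restrictBimodule U).left.ρ ω' ↔
      ∃ η, (𝒢.restrictBimodule U).right.σ ω = 𝒢.r η ∧
        (𝒢.restrictBimodule U).right.act ω η = ω' := by
  refine ⟨fun h => ?_, fun ⟨η, hη, hωη⟩ => hωη ▸ ((𝒢.restrictBimodule U).ρ_actr ω η hη).symm⟩
  have h : 𝒢.r ω.1 = 𝒢.r ω'.1 := congrArg Subtype.val h
  refine ⟨𝒢.mul (𝒢.inv ω.1) ω'.1, (𝒢.r_inv_mul h).symm, Subtype.ext ?_⟩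
  exact (coe_restrictRightMul (𝒢.r_inv_mul h).symm).trans (𝒢.mul_inv_cancel_left h)

theorem restrictBimodule_σ_eq_iff (ω ω' : {γ : G // 𝒢.r γ ∈ U}) :
    (𝒢.restrictBimodule U).right.σ ω = (𝒢.restrictBimodule U).right.σ ω' ↔
      ∃ γ, (𝒢.restrict U).s γ = (𝒢.restrictBimodule U).left.ρ ω ∧
        (𝒢.restrictBimodule U).left.act γ ω = ω' := by
  refine ⟨fun h => ?_, fun ⟨γ, hγ, hγω⟩ => hγω ▸ ((𝒢.restrictBimodule U).σ_actl γ ω hγ).symm⟩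
  have h : 𝒢.s ω'.1 = 𝒢.s ω.1 := h.symm
  refine ⟨⟨_, 𝒢.r_mem_and_s_mem_mul_inv U ω'.2 ω.2 h⟩, Subtype.ext (𝒢.s_mul_inv h), Subtype.ext ?_⟩
  exact (coe_restrictLeftMul (𝒢.s_mul_inv h)).trans (𝒢.inv_mul_cancel_right h)

theorem isEquivalence_restrictBimodule [T2Space O] (h𝒢 : 𝒢.OpenMaps) (hU : IsOpen U)
    (hU_meets : ∀ x, ∃ γ, 𝒢.r γ ∈ U ∧ 𝒢.s γ = x) : IsEquivalence (𝒢.restrictBimodule U) where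
  free_left := 𝒢.restrictLeftAction_free U
  proper_left := 𝒢.restrictLeftAction_proper U
  free_right := 𝒢.restrictRightAction_free U
  proper_right := 𝒢.restrictRightAction_proper U
  ρ_open := (h𝒢.1.comp (hU.preimage 𝒢.continuous_r).isOpenMap_subtype_val).subtype_mk _
  ρ_surj x := ⟨⟨𝒢.unit x, (𝒢.r_unit x).symm ▸ x.2⟩, Subtype.ext (𝒢.r_unit x)⟩
  ρ_fibres := 𝒢.restrictBimodule_ρ_eq_iff U
  σ_open := h𝒢.2.comp (hU.preimage 𝒢.continuous_r).isOpenMap_subtype_val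
  σ_surj x := let ⟨γ, hγ, hγx⟩ := hU_meets x; ⟨⟨γ, hγ⟩, hγx⟩
  σ_fibres := 𝒢.restrictBimodule_σ_eq_iff U

end TopGroupoid

theorem restriction_to_full_open_subset_general
    [LocallyCompactSpace G] [T2Space G] [T2Space O]
    (𝒢 : TopGroupoid G O) (h𝒢 : 𝒢.OpenMaps)
    (U : Set O) (hU : IsOpen U)
    (hfull : ∀ γ : G, ∃ γ₁ γ₂ : G, 𝒢.s γ₁ = 𝒢.r γ₂ ∧ 𝒢.s γ₁ ∈ U ∧ 𝒢.mul γ₁ γ₂ = γ) :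
    LocallyCompactSpace {γ : G // 𝒢.r γ ∈ U ∧ 𝒢.s γ ∈ U} ∧
    T2Space {γ : G // 𝒢.r γ ∈ U ∧ 𝒢.s γ ∈ U} ∧
    ∃ 𝒦 : TopGroupoid {γ : G // 𝒢.r γ ∈ U ∧ 𝒢.s γ ∈ U} {x : O // x ∈ U},
      -- the structure maps of `𝒦` are the restrictions of those of `𝒢`
      (∀ γ, ((𝒦.r γ : {x : O // x ∈ U}) : O) = 𝒢.r (γ : G)) ∧
      (∀ γ, ((𝒦.s γ : {x : O // x ∈ U}) : O) = 𝒢.s (γ : G)) ∧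
      (∀ x : {x : O // x ∈ U}, ((𝒦.unit x : {γ : G // 𝒢.r γ ∈ U ∧ 𝒢.s γ ∈ U}) : G)
          = 𝒢.unit (x : O)) ∧
      (∀ γ γ' : {γ : G // 𝒢.r γ ∈ U ∧ 𝒢.s γ ∈ U}, 𝒢.s (γ : G) = 𝒢.r (γ' : G) →
        ((𝒦.mul γ γ' : {γ : G // 𝒢.r γ ∈ U ∧ 𝒢.s γ ∈ U}) : G) = 𝒢.mul (γ : G) (γ' : G)) ∧
      (∀ γ, ((𝒦.inv γ : {γ : G // 𝒢.r γ ∈ U ∧ 𝒢.s γ ∈ U}) : G) = 𝒢.inv (γ : G)) ∧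
      -- `𝒦` has open range and source maps
      𝒦.OpenMaps ∧
      -- `G^U = r⁻¹(U)` is a `𝒦`-`𝒢`-equivalence via left/right multiplication
      ∃ M : GBimodule 𝒦 𝒢 {γ : G // 𝒢.r γ ∈ U},
        (∀ ω : {γ : G // 𝒢.r γ ∈ U}, ((M.left.ρ ω : {x : O // x ∈ U}) : O) = 𝒢.r (ω : G)) ∧
        (∀ ω : {γ : G // 𝒢.r γ ∈ U}, M.right.σ ω = 𝒢.s (ω : G)) ∧
        (∀ (γ : {γ : G // 𝒢.r γ ∈ U ∧ 𝒢.s γ ∈ U}) (ω : {γ : G // 𝒢.r γ ∈ U}),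
          𝒢.s (γ : G) = 𝒢.r (ω : G) →
            ((M.left.act γ ω : {γ : G // 𝒢.r γ ∈ U}) : G) = 𝒢.mul (γ : G) (ω : G)) ∧
        (∀ (ω : {γ : G // 𝒢.r γ ∈ U}) (γ : G), 𝒢.s (ω : G) = 𝒢.r γ →
            ((M.right.act ω γ : {γ : G // 𝒢.r γ ∈ U}) : G) = 𝒢.mul (ω : G) γ) ∧
        IsEquivalence M :=
  ⟨(𝒢.isOpen_setOf_r_mem_and_s_mem U hU).locallyCompactSpace, inferInstance, 𝒢.restrict U,
    fun _ => rfl, fun _ => rfl, fun _ => rfl, fun _ _ => TopGroupoid.coe_restrictMul, fun _ => rfl,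
    𝒢.openMaps_restrict U h𝒢 hU, 𝒢.restrictBimodule U, fun _ => rfl, fun _ => rfl,
    fun _ _ => TopGroupoid.coe_restrictLeftMul, fun _ _ => TopGroupoid.coe_restrictRightMul,
    𝒢.isEquivalence_restrictBimodule U h𝒢 hU (𝒢.exists_r_mem_and_s_eq_of_full U hfull)⟩

/-- **Restriction to a full open subset.**  Let `𝒢` be a locally compact Hausdorff groupoid
with open range and source maps and let `U ⊆ 𝒢⁽⁰⁾` be a full open subset.  Then
`G_U^U = r⁻¹(U) ∩ s⁻¹(U)`, with the restricted operations, is a locally compact Hausdorff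
groupoid with open range and source maps, and `G^U = r⁻¹(U)`, equipped with the left
`G_U^U`-action and the right `𝒢`-action given by multiplication, is a `G_U^U`-`𝒢`-equivalence. -/
theorem restriction_to_full_open_subset
    [LocallyCompactSpace G] [T2Space G] [LocallyCompactSpace O] [T2Space O]
    (𝒢 : TopGroupoid G O) (h𝒢 : 𝒢.OpenMaps)
    (U : Set O) (hU : IsOpen U)
    (hfull : ∀ γ : G, ∃ γ₁ γ₂ : G, 𝒢.s γ₁ = 𝒢.r γ₂ ∧ 𝒢.s γ₁ ∈ U ∧ 𝒢.mul γ₁ γ₂ = γ) :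
    LocallyCompactSpace {γ : G // 𝒢.r γ ∈ U ∧ 𝒢.s γ ∈ U} ∧
    T2Space {γ : G // 𝒢.r γ ∈ U ∧ 𝒢.s γ ∈ U} ∧
    ∃ 𝒦 : TopGroupoid {γ : G // 𝒢.r γ ∈ U ∧ 𝒢.s γ ∈ U} {x : O // x ∈ U},
      -- the structure maps of `𝒦` are the restrictions of those of `𝒢`
      (∀ γ, ((𝒦.r γ : {x : O // x ∈ U}) : O) = 𝒢.r (γ : G)) ∧
      (∀ γ, ((𝒦.s γ : {x : O // x ∈ U}) : O) = 𝒢.s (γ : G)) ∧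
      (∀ x : {x : O // x ∈ U}, ((𝒦.unit x : {γ : G // 𝒢.r γ ∈ U ∧ 𝒢.s γ ∈ U}) : G)
          = 𝒢.unit (x : O)) ∧
      (∀ γ γ' : {γ : G // 𝒢.r γ ∈ U ∧ 𝒢.s γ ∈ U}, 𝒢.s (γ : G) = 𝒢.r (γ' : G) →
        ((𝒦.mul γ γ' : {γ : G // 𝒢.r γ ∈ U ∧ 𝒢.s γ ∈ U}) : G) = 𝒢.mul (γ : G) (γ' : G)) ∧
      (∀ γ, ((𝒦.inv γ : {γ : G // 𝒢.r γ ∈ U ∧ 𝒢.s γ ∈ U}) : G) = 𝒢.inv (γ : G)) ∧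
      -- `𝒦` has open range and source maps
      𝒦.OpenMaps ∧
      -- `G^U = r⁻¹(U)` is a `𝒦`-`𝒢`-equivalence via left/right multiplication
      ∃ M : GBimodule 𝒦 𝒢 {γ : G // 𝒢.r γ ∈ U},
        (∀ ω : {γ : G // 𝒢.r γ ∈ U}, ((M.left.ρ ω : {x : O // x ∈ U}) : O) = 𝒢.r (ω : G)) ∧
        (∀ ω : {γ : G // 𝒢.r γ ∈ U}, M.right.σ ω = 𝒢.s (ω : G)) ∧
        (∀ (γ : {γ : G // 𝒢.r γ ∈ U ∧ 𝒢.s γ ∈ U}) (ω : {γ : G // 𝒢.r γ ∈ U}),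
          𝒢.s (γ : G) = 𝒢.r (ω : G) →
            ((M.left.act γ ω : {γ : G // 𝒢.r γ ∈ U}) : G) = 𝒢.mul (γ : G) (ω : G)) ∧
        (∀ (ω : {γ : G // 𝒢.r γ ∈ U}) (γ : G), 𝒢.s (ω : G) = 𝒢.r γ →
            ((M.right.act ω γ : {γ : G // 𝒢.r γ ∈ U}) : G) = 𝒢.mul (ω : G) γ) ∧
        IsEquivalence M :=
  restriction_to_full_open_subset_general 𝒢 h𝒢 U hU hfull

end Statement1
end

section
/- Let X be a locally compact Hausdorff space, B a u.s.c. field of Banach algebras over X, E and F Banach B-pairs, and T a continuous field of B-linear operators from E to F. The following are equivalent: (1) T is locally compact; (2) for every compact K ⊆ X and ε > 0 there are finitely many ξ_i^< ∈ Γ(X,E^<), η_i^> ∈ Γ(X,F^>) with ‖T_k − Σ_i |η_i^>(k)⟩⟨ξ_i^<(k)|‖ ≤ ε for all k ∈ K; (3) for every x ∈ X and ε > 0 there are a neighbourhood U of x and a compact operator S ∈ K_B(E,F) with ‖T_u − S_u‖ ≤ ε for all u ∈ U; (4) for every compact K ⊆ X and ε > 0 there is S ∈ K_B(E,F) with ‖T_k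 − S_k‖ ≤ ε for all k ∈ K; (5) φT is compact for every φ ∈ C_c(X). -/
/-! ## Upper semi-continuous fields of Banach spaces, Banach algebras and Banach pairs -/

universe u v w x y z

/-- An upper semi-continuous field of Banach spaces over `X`: a family of (complex) Banach
spaces `(E x)_{x ∈ X}` together with a space of sections `Γ` satisfying Lafforgue's
conditions (C1)–(C4). -/
structure USCField (X : Type u) [TopologicalSpace X] (E : X → Type v)
    [∀ x, NormedAddCommGroup (E x)] [∀ x, NormedSpace ℂ (E x)]
    [∀ x, CompleteSpace (E x)] : Type (max u v) where
  Γ : Set (∀ x, E x)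
  /-- (C1) `Γ` is a linear subspace (zero) -/
  zero_mem : (fun x => (0 : E x)) ∈ Γ
  /-- (C1) `Γ` is a linear subspace (addition) -/
  add_mem : ∀ {ξ η}, ξ ∈ Γ → η ∈ Γ → (fun x => ξ x + η x) ∈ Γ
  /-- (C1) `Γ` is a linear subspace (scalar multiplication) -/
  smul_mem : ∀ (c : ℂ) {ξ}, ξ ∈ Γ → (fun x => c • ξ x) ∈ Γ
  /-- (C2) evaluation has dense image in every fibre -/
  dense_eval : ∀ (x : X) (e : E x) (ε : ℝ), 0 < ε → ∃ ξ ∈ Γ, ‖ξ x - e‖ < ε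
  /-- (C3) norms of sections are upper semi-continuous -/
  usc_norm : ∀ ξ ∈ Γ, UpperSemicontinuous fun x => ‖ξ x‖
  /-- (C4) a selection that is locally uniformly approximable by sections is a section -/
  locally_approx_mem : ∀ ξ : ∀ x, E x,
      (∀ (x₀ : X) (ε : ℝ), 0 < ε → ∃ γ ∈ Γ, ∃ U ∈ nhds x₀, ∀ x ∈ U, ‖ξ x - γ x‖ ≤ ε) →
      ξ ∈ Γ

namespace USCField

variable {X : Type u} [TopologicalSpace X] {E : X → Type v}
  [∀ x, NormedAddCommGroup (E x)] [∀ x, NormedSpace ℂ (E x)] [∀ x, CompleteSpace (E x)]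

/-- The sections vanishing at infinity, `Γ₀(X, E)`. -/
def Γ₀ (F : USCField X E) : Set (∀ x, E x) :=
  {ξ | ξ ∈ F.Γ ∧ ∀ ε : ℝ, 0 < ε → ∃ K : Set X, IsCompact K ∧ ∀ x ∉ K, ‖ξ x‖ ≤ ε}

/-- The sections with compact support, `Γ_c(X, E)`. -/
def Γc (F : USCField X E) : Set (∀ x, E x) :=
  {ξ | ξ ∈ F.Γ ∧ ∃ K : Set X, IsCompact K ∧ ∀ x ∉ K, ξ x = 0}

end USCField

/-- The set of sections of the pullback field `p*E` along `p : Y → X`: the selections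
`y ↦ ξ y ∈ E (p y)` which are locally uniformly approximable by sections of the form
`γ ∘ p` with `γ ∈ Γ`. -/
def pbSec {X : Type u} {Y : Type w} [TopologicalSpace Y] (p : Y → X)
    (E : X → Type v) [∀ x, NormedAddCommGroup (E x)] (Γ : Set (∀ x, E x)) :
    Set (∀ y, E (p y)) :=
  {ξ | ∀ (y₀ : Y) (ε : ℝ), 0 < ε → ∃ γ ∈ Γ, ∃ V ∈ nhds y₀, ∀ y ∈ V, ‖ξ y - γ (p y)‖ ≤ ε}

/-- The sections of the pullback field which vanish at infinity. -/
def pbSec₀ {X : Type u} {Y : Type w} [TopologicalSpace Y] (p : Y → X)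
    (E : X → Type v) [∀ x, NormedAddCommGroup (E x)] (Γ : Set (∀ x, E x)) :
    Set (∀ y, E (p y)) :=
  {ξ | ξ ∈ pbSec p E Γ ∧ ∀ ε : ℝ, 0 < ε → ∃ K : Set Y, IsCompact K ∧ ∀ y ∉ K, ‖ξ y‖ ≤ ε}

/-- A bundled u.s.c. field of Banach spaces over `X`. -/
structure BanachSpaceFieldB (X : Type u) [TopologicalSpace X] : Type (max u (v + 1)) where
  E : X → Type v
  [instN : ∀ x, NormedAddCommGroup (E x)]
  [instS : ∀ x, NormedSpace ℂ (E x)]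
  [instC : ∀ x, CompleteSpace (E x)]
  F : USCField X E

attribute [instance] BanachSpaceFieldB.instN BanachSpaceFieldB.instS BanachSpaceFieldB.instC

/-- A bundled u.s.c. field of Banach algebras over `X`: a u.s.c. field of Banach spaces whose
fibres are (complex, possibly non-unital) Banach algebras, with multiplication a contractive
continuous field of bilinear maps (in particular sections are closed under the fibrewise
product). -/
structure BanachAlgFieldB (X : Type u) [TopologicalSpace X] : Type (max u (v + 1)) where
  A : X → Type v
  [instR : ∀ x, NonUnitalNormedRing (A x)]
  [instS : ∀ x, NormedSpace ℂ (A x)]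
  [instM : ∀ x, SMulCommClass ℂ (A x) (A x)]
  [instM' : ∀ x, IsScalarTower ℂ (A x) (A x)]
  [instC : ∀ x, CompleteSpace (A x)]
  F : USCField X A
  mul_mem : ∀ {ξ η}, ξ ∈ F.Γ → η ∈ F.Γ → (fun x => ξ x * η x) ∈ F.Γ

attribute [instance] BanachAlgFieldB.instR BanachAlgFieldB.instS BanachAlgFieldB.instM
  BanachAlgFieldB.instM' BanachAlgFieldB.instC

/-- A u.s.c. field of Banach algebras is non-degenerate if in each fibre the span of products
is dense. -/
def BanachAlgFieldB.Nondegenerate {X : Type u} [TopologicalSpace X]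
    (𝔅 : BanachAlgFieldB.{u, v} X) : Prop :=
  ∀ x, Dense (Submodule.span ℂ {c : 𝔅.A x | ∃ a b : 𝔅.A x, c = a * b} : Set (𝔅.A x))

/-- A bundled Banach `B`-pair over `X`: u.s.c. fields `E^<` (a left Banach `B`-module) and
`E^>` (a right Banach `B`-module) together with a contractive `B`-bilinear pairing
`⟨·,·⟩ : E^< ×_X E^> → B`. -/
structure BanachPairB {X : Type u} [TopologicalSpace X] (𝔅 : BanachAlgFieldB.{u, v} X) :
    Type (max u (v + 1)) where
  Em : X → Type v
  Ep : X → Type v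
  [instmN : ∀ x, NormedAddCommGroup (Em x)]
  [instmS : ∀ x, NormedSpace ℂ (Em x)]
  [instmC : ∀ x, CompleteSpace (Em x)]
  [instpN : ∀ x, NormedAddCommGroup (Ep x)]
  [instpS : ∀ x, NormedSpace ℂ (Ep x)]
  [instpC : ∀ x, CompleteSpace (Ep x)]
  Fm : USCField X Em
  Fp : USCField X Ep
  /-- the left action of `B` on `E^<` -/
  lsmul : ∀ x, 𝔅.A x →L[ℂ] Em x →L[ℂ] Em x
  /-- the right action of `B` on `E^>` -/
  rsmul : ∀ x, Ep x →L[ℂ] 𝔅.A x →L[ℂ] Ep x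
  /-- the pairing `⟨·,·⟩ : E^< ×_X E^> → B` -/
  pairing : ∀ x, Em x →L[ℂ] Ep x →L[ℂ] 𝔅.A x
  lsmul_mul : ∀ x (a b : 𝔅.A x) e, lsmul x (a * b) e = lsmul x a (lsmul x b e)
  rsmul_mul : ∀ x e (a b : 𝔅.A x), rsmul x (rsmul x e a) b = rsmul x e (a * b)
  norm_lsmul : ∀ x (a : 𝔅.A x) e, ‖lsmul x a e‖ ≤ ‖a‖ * ‖e‖
  norm_rsmul : ∀ x e (a : 𝔅.A x), ‖rsmul x e a‖ ≤ ‖e‖ * ‖a‖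
  norm_pairing : ∀ x e f, ‖pairing x e f‖ ≤ ‖e‖ * ‖f‖
  pairing_lsmul : ∀ x (a : 𝔅.A x) e f, pairing x (lsmul x a e) f = a * pairing x e f
  pairing_rsmul : ∀ x e f (a : 𝔅.A x), pairing x e (rsmul x f a) = pairing x e f * a
  lsmul_mem : ∀ {β ξ}, β ∈ 𝔅.F.Γ → ξ ∈ Fm.Γ → (fun x => lsmul x (β x) (ξ x)) ∈ Fm.Γ
  rsmul_mem : ∀ {ξ β}, ξ ∈ Fp.Γ → β ∈ 𝔅.F.Γ → (fun x => rsmul x (ξ x) (β x)) ∈ Fp.Γ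
  pairing_mem : ∀ {ξ η}, ξ ∈ Fm.Γ → η ∈ Fp.Γ →
    (fun x => pairing x (ξ x) (η x)) ∈ 𝔅.F.Γ

attribute [instance] BanachPairB.instmN BanachPairB.instmS BanachPairB.instmC
  BanachPairB.instpN BanachPairB.instpS BanachPairB.instpC

namespace BanachPairB

variable {X : Type u} [TopologicalSpace X] {𝔅 : BanachAlgFieldB.{u, v} X}

/-- Non-degeneracy of a Banach pair: in each fibre, `E^> B` spans a dense subspace of `E^>`
and `B E^<` spans a dense subspace of `E^<`. -/
def Nondegenerate (P : BanachPairB 𝔅) : Prop :=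
  (∀ x, Dense (Submodule.span ℂ
      {e : P.Ep x | ∃ (f : P.Ep x) (a : 𝔅.A x), e = P.rsmul x f a} : Set (P.Ep x))) ∧
  (∀ x, Dense (Submodule.span ℂ
      {e : P.Em x | ∃ (a : 𝔅.A x) (f : P.Em x), e = P.lsmul x a f} : Set (P.Em x)))

end BanachPairB

section Operators

variable {X : Type u} [TopologicalSpace X] {𝔅 : BanachAlgFieldB.{u, v} X}

/-- The fibrewise rank-one operator `|η⟩⟨ξ| : E^> → F^>`, `e ↦ η ⟨ξ, e⟩`. -/
noncomputable def rankOneP (P Q : BanachPairB 𝔅) (x : X) (ξ : P.Em x) (η : Q.Ep x) :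
    P.Ep x →L[ℂ] Q.Ep x :=
  (Q.rsmul x η).comp (P.pairing x ξ)

/-- The fibrewise rank-one operator `|η⟩⟨ξ| : F^< → E^<`, `f ↦ ⟨f, η⟩ ξ`. -/
noncomputable def rankOneM (P Q : BanachPairB 𝔅) (x : X) (ξ : P.Em x) (η : Q.Ep x) :
    Q.Em x →L[ℂ] P.Em x :=
  ((P.lsmul x).flip ξ).comp ((Q.pairing x).flip η)

variable (P Q : BanachPairB 𝔅)

/-- A family of fibrewise operators between two Banach pairs ("a field of linear maps"):
`T^> : E^> → F^>` and `T^< : F^< → E^<`. -/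
structure OpFamily (P Q : BanachPairB 𝔅) : Type (max u v) where
  Tp : ∀ x, P.Ep x →L[ℂ] Q.Ep x
  Tm : ∀ x, Q.Em x →L[ℂ] P.Em x

namespace OpFamily

/-- A continuous field of `B`-linear operators between Banach pairs: fibrewise `B`-linear,
adjointable for the pairings, mapping sections to sections and locally bounded. -/
structure IsLin {P Q : BanachPairB 𝔅} (T : OpFamily P Q) : Prop where
  map_rsmul : ∀ x e (a : 𝔅.A x), T.Tp x (P.rsmul x e a) = Q.rsmul x (T.Tp x e) a
  map_lsmul : ∀ x (a : 𝔅.A x) f, T.Tm x (Q.lsmul x a f) = P.lsmul x a (T.Tm x f)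
  adjoint : ∀ x f e, P.pairing x (T.Tm x f) e = Q.pairing x f (T.Tp x e)
  maps_sections_p : ∀ ξ ∈ P.Fp.Γ, (fun x => T.Tp x (ξ x)) ∈ Q.Fp.Γ
  maps_sections_m : ∀ ξ ∈ Q.Fm.Γ, (fun x => T.Tm x (ξ x)) ∈ P.Fm.Γ
  locally_bounded : ∀ x₀ : X, ∃ U ∈ nhds x₀, ∃ C : ℝ,
    ∀ x ∈ U, ‖T.Tp x‖ ≤ C ∧ ‖T.Tm x‖ ≤ C

/-- Boundedness of a field of operators. -/
def IsBounded {P Q : BanachPairB 𝔅} (T : OpFamily P Q) : Prop :=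
  ∃ C : ℝ, ∀ x, ‖T.Tp x‖ ≤ C ∧ ‖T.Tm x‖ ≤ C

end OpFamily

/-- A field of operators is **locally compact** if near every point it can be uniformly
approximated by finite sums of rank-one operators built from arbitrary sections. -/
def IsLocallyCompactOp {P Q : BanachPairB 𝔅} (T : OpFamily P Q) : Prop :=
  ∀ (x₀ : X) (ε : ℝ), 0 < ε → ∃ U ∈ nhds x₀, ∃ n : ℕ,
    ∃ ξ : Fin n → ∀ x, P.Em x, ∃ η : Fin n → ∀ x, Q.Ep x,
      (∀ i, ξ i ∈ P.Fm.Γ) ∧ (∀ i, η i ∈ Q.Fp.Γ) ∧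
      ∀ x ∈ U, ‖T.Tp x - ∑ i, rankOneP P Q x (ξ i x) (η i x)‖ ≤ ε ∧
               ‖T.Tm x - ∑ i, rankOneM P Q x (ξ i x) (η i x)‖ ≤ ε

/-- A field of operators is **compact** if it is a uniform (over `X`) limit of finite sums of
rank-one operators built from sections vanishing at infinity. -/
def IsCompactOp {P Q : BanachPairB 𝔅} (T : OpFamily P Q) : Prop :=
  ∀ ε : ℝ, 0 < ε → ∃ n : ℕ,
    ∃ ξ : Fin n → ∀ x, P.Em x, ∃ η : Fin n → ∀ x, Q.Ep x,
      (∀ i, ξ i ∈ P.Fm.Γ₀) ∧ (∀ i, η i ∈ Q.Fp.Γ₀) ∧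
      ∀ x, ‖T.Tp x - ∑ i, rankOneP P Q x (ξ i x) (η i x)‖ ≤ ε ∧
           ‖T.Tm x - ∑ i, rankOneM P Q x (ξ i x) (η i x)‖ ≤ ε

end Operators

/-! ## Statement 4: characterisation of locally compact operators -/

/-! ## Auxiliary lemmas -/

section AuxUSC

variable {X : Type u} [TopologicalSpace X] {E : X → Type v}
  [∀ x, NormedAddCommGroup (E x)] [∀ x, NormedSpace ℂ (E x)] [∀ x, CompleteSpace (E x)]

theorem USCField.finsum_mem (F : USCField X E) {ι : Type*} (s : Finset ι)
    (f : ι → ∀ x, E x) (hf : ∀ i ∈ s, f i ∈ F.Γ) :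
    (fun x => ∑ i ∈ s, f i x) ∈ F.Γ := by
  classical
  revert hf
  refine Finset.induction_on s (fun _ => by simpa using F.zero_mem) ?_
  intro a t ha ih hf
  simp only [Finset.sum_insert ha]
  exact F.add_mem (hf a (Finset.mem_insert_self a t))
    (ih fun i hi => hf i (Finset.mem_insert_of_mem hi))

/-- `Γ` is closed under multiplication by a continuous scalar function. -/
theorem USCField.contSMul_mem (F : USCField X E) {φ : X → ℂ} (hφ : Continuous φ)
    {ξ} (hξ : ξ ∈ F.Γ) : (fun x => φ x • ξ x) ∈ F.Γ := by
  apply F.locally_approx_mem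
  intro x₀ ε hε
  refine ⟨fun x => φ x₀ • ξ x, F.smul_mem _ hξ, ?_⟩
  set M : ℝ := ‖ξ x₀‖ + 1 with hMdef
  have hM : 0 < M := by positivity
  have h1 : ∀ᶠ x in nhds x₀, ‖ξ x‖ < M :=
    F.usc_norm ξ hξ x₀ M (by simp [hMdef])
  have hc : Filter.Tendsto (fun x => ‖φ x - φ x₀‖) (nhds x₀) (nhds ‖φ x₀ - φ x₀‖) :=
    ((hφ.sub continuous_const).norm).continuousAt
  have h2 : ∀ᶠ x in nhds x₀, ‖φ x - φ x₀‖ < ε / M := by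
    apply hc.eventually_lt_const
    simpa using div_pos hε hM
  refine Filter.eventually_iff_exists_mem.mp ?_
  filter_upwards [h1, h2] with x hx1 hx2
  have heq : ‖φ x • ξ x - φ x₀ • ξ x‖ = ‖φ x - φ x₀‖ * ‖ξ x‖ := by
    rw [← sub_smul, norm_smul]
  show ‖φ x • ξ x - φ x₀ • ξ x‖ ≤ ε
  rw [heq]
  calc ‖φ x - φ x₀‖ * ‖ξ x‖ ≤ (ε / M) * M :=
        mul_le_mul hx2.le hx1.le (norm_nonneg _) (div_pos hε hM).le
    _ = ε := div_mul_cancel₀ ε hM.ne'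

theorem USCField.contSMul_mem_Γ₀_of_compactSupport (F : USCField X E) {φ : X → ℂ}
    (hφ : Continuous φ) (hφc : HasCompactSupport φ) {ξ} (hξ : ξ ∈ F.Γ) :
    (fun x => φ x • ξ x) ∈ F.Γ₀ := by
  refine ⟨F.contSMul_mem hφ hξ, fun ε hε => ⟨tsupport φ, hφc, fun x hx => ?_⟩⟩
  show ‖φ x • ξ x‖ ≤ ε
  rw [image_eq_zero_of_notMem_tsupport hx, zero_smul, norm_zero]
  exact hε.le

theorem USCField.contSMul_mem_Γ₀ (F : USCField X E) {φ : X → ℂ} (hφ : Continuous φ)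
    {M : ℝ} (hφM : ∀ x, ‖φ x‖ ≤ M) {ξ} (hξ : ξ ∈ F.Γ₀) :
    (fun x => φ x • ξ x) ∈ F.Γ₀ := by
  obtain ⟨hξΓ, hξ0⟩ := hξ
  refine ⟨F.contSMul_mem hφ hξΓ, fun ε hε => ?_⟩
  set M' : ℝ := max M 0 + 1 with hM'def
  have hM' : 0 < M' := by positivity
  obtain ⟨K, hKc, hK⟩ := hξ0 (ε / M') (div_pos hε hM')
  refine ⟨K, hKc, fun x hx => ?_⟩
  calc ‖φ x • ξ x‖ = ‖φ x‖ * ‖ξ x‖ := norm_smul _ _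
    _ ≤ M' * (ε / M') :=
        mul_le_mul ((hφM x).trans (by simp [hM'def]; linarith [le_max_left M (0:ℝ)]))
          (hK x hx) (norm_nonneg _) hM'.le
    _ = ε := mul_div_cancel₀ ε hM'.ne'

end AuxUSC

section AuxOps

variable {X : Type u} [TopologicalSpace X] {𝔅 : BanachAlgFieldB.{u, v} X}
  {P Q : BanachPairB 𝔅}

theorem rankOneP_smul (x : X) (ξ : P.Em x) (c : ℂ) (η : Q.Ep x) :
    rankOneP P Q x ξ (c • η) = c • rankOneP P Q x ξ η := by
  ext e; simp [rankOneP]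

theorem rankOneM_smul (x : X) (ξ : P.Em x) (c : ℂ) (η : Q.Ep x) :
    rankOneM P Q x ξ (c • η) = c • rankOneM P Q x ξ η := by
  ext f; simp [rankOneM]

theorem norm_rankOneP_le (x : X) (ξ : P.Em x) (η : Q.Ep x) :
    ‖rankOneP P Q x ξ η‖ ≤ ‖η‖ * ‖ξ‖ := by
  refine ContinuousLinearMap.opNorm_le_bound _ (by positivity) fun e => ?_
  calc ‖rankOneP P Q x ξ η e‖ = ‖Q.rsmul x η (P.pairing x ξ e)‖ := rfl
    _ ≤ ‖η‖ * ‖P.pairing x ξ e‖ := Q.norm_rsmul x η _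
    _ ≤ ‖η‖ * (‖ξ‖ * ‖e‖) :=
        mul_le_mul_of_nonneg_left (P.norm_pairing x ξ e) (norm_nonneg _)
    _ = ‖η‖ * ‖ξ‖ * ‖e‖ := by ring

theorem norm_rankOneM_le (x : X) (ξ : P.Em x) (η : Q.Ep x) :
    ‖rankOneM P Q x ξ η‖ ≤ ‖η‖ * ‖ξ‖ := by
  refine ContinuousLinearMap.opNorm_le_bound _ (by positivity) fun f => ?_
  calc ‖rankOneM P Q x ξ η f‖ = ‖P.lsmul x (Q.pairing x f η) ξ‖ := rfl
    _ ≤ ‖Q.pairing x f η‖ * ‖ξ‖ := P.norm_lsmul x _ ξ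
    _ ≤ ‖f‖ * ‖η‖ * ‖ξ‖ :=
        mul_le_mul_of_nonneg_right (Q.norm_pairing x f η) (norm_nonneg _)
    _ = ‖η‖ * ‖ξ‖ * ‖f‖ := by ring

theorem rankOneP_rsmul (x : X) (ξ : P.Em x) (η : Q.Ep x) (e : P.Ep x) (a : 𝔅.A x) :
    rankOneP P Q x ξ η (P.rsmul x e a) = Q.rsmul x (rankOneP P Q x ξ η e) a := by
  show Q.rsmul x η (P.pairing x ξ (P.rsmul x e a)) = _
  rw [P.pairing_rsmul, ← Q.rsmul_mul]
  rfl

theorem rankOneM_lsmul (x : X) (ξ : P.Em x) (η : Q.Ep x) (a : 𝔅.A x) (f : Q.Em x) :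
    rankOneM P Q x ξ η (Q.lsmul x a f) = P.lsmul x a (rankOneM P Q x ξ η f) := by
  show P.lsmul x (Q.pairing x (Q.lsmul x a f) η) ξ = _
  rw [Q.pairing_lsmul, P.lsmul_mul]
  rfl

theorem rankOne_adjoint (x : X) (ξ : P.Em x) (η : Q.Ep x) (f : Q.Em x) (e : P.Ep x) :
    P.pairing x (rankOneM P Q x ξ η f) e = Q.pairing x f (rankOneP P Q x ξ η e) := by
  show P.pairing x (P.lsmul x (Q.pairing x f η) ξ) e
      = Q.pairing x f (Q.rsmul x η (P.pairing x ξ e))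
  rw [P.pairing_lsmul, Q.pairing_rsmul]

/-- The operator family given by a finite sum of fibrewise rank-one operators. -/
noncomputable def rkFam (n : ℕ) (ξ : Fin n → ∀ x, P.Em x) (η : Fin n → ∀ x, Q.Ep x) :
    OpFamily P Q :=
  ⟨fun x => ∑ i, rankOneP P Q x (ξ i x) (η i x),
   fun x => ∑ i, rankOneM P Q x (ξ i x) (η i x)⟩

theorem rkFam_isLin {n : ℕ} {ξ : Fin n → ∀ x, P.Em x} {η : Fin n → ∀ x, Q.Ep x}
    (hξ : ∀ i, ξ i ∈ P.Fm.Γ) (hη : ∀ i, η i ∈ Q.Fp.Γ) :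
    (rkFam n ξ η).IsLin := by
  constructor
  · intro x e a
    simp only [rkFam, ContinuousLinearMap.sum_apply, map_sum]
    exact Finset.sum_congr rfl fun i _ => rankOneP_rsmul x (ξ i x) (η i x) e a
  · intro x a f
    simp only [rkFam, ContinuousLinearMap.sum_apply, map_sum]
    exact Finset.sum_congr rfl fun i _ => rankOneM_lsmul x (ξ i x) (η i x) a f
  · intro x f e
    simp only [rkFam, ContinuousLinearMap.sum_apply, map_sum]
    exact Finset.sum_congr rfl fun i _ => rankOne_adjoint x (ξ i x) (η i x) f e
  · intro γ hγ
    have : (fun x => (rkFam n ξ η).Tp x (γ x))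
        = fun x => ∑ i, Q.rsmul x (η i x) (P.pairing x (ξ i x) (γ x)) := by
      funext x
      simp [rkFam, rankOneP]
    rw [this]
    exact Q.Fp.finsum_mem _ _ fun i _ =>
      Q.rsmul_mem (hη i) (P.pairing_mem (hξ i) hγ)
  · intro γ hγ
    have : (fun x => (rkFam n ξ η).Tm x (γ x))
        = fun x => ∑ i, P.lsmul x (Q.pairing x (γ x) (η i x)) (ξ i x) := by
      funext x
      simp [rkFam, rankOneM]
    rw [this]
    exact P.Fm.finsum_mem _ _ fun i _ =>
      P.lsmul_mem (Q.pairing_mem hγ (hη i)) (hξ i)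
  · intro x₀
    have hev : ∀ᶠ x in nhds x₀, ∀ i : Fin n,
        ‖ξ i x‖ < ‖ξ i x₀‖ + 1 ∧ ‖η i x‖ < ‖η i x₀‖ + 1 := by
      rw [Filter.eventually_all]
      intro i
      exact ((P.Fm.usc_norm _ (hξ i) x₀ _ (by linarith)).and
        (Q.Fp.usc_norm _ (hη i) x₀ _ (by linarith)))
    obtain ⟨U, hU, hUev⟩ := Filter.eventually_iff_exists_mem.mp hev
    refine ⟨U, hU, ∑ i : Fin n, (‖η i x₀‖ + 1) * (‖ξ i x₀‖ + 1), fun x hx => ?_⟩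
    have key : ∀ i : Fin n,
        ‖η i x‖ * ‖ξ i x‖ ≤ (‖η i x₀‖ + 1) * (‖ξ i x₀‖ + 1) := fun i =>
      mul_le_mul (hUev x hx i).2.le (hUev x hx i).1.le (norm_nonneg _)
        (by positivity)
    constructor
    · calc ‖(rkFam n ξ η).Tp x‖
          = ‖∑ i, rankOneP P Q x (ξ i x) (η i x)‖ := rfl
        _ ≤ ∑ i, ‖rankOneP P Q x (ξ i x) (η i x)‖ := norm_sum_le _ _
        _ ≤ ∑ i : Fin n, (‖η i x₀‖ + 1) * (‖ξ i x₀‖ + 1) :=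
            Finset.sum_le_sum fun i _ => (norm_rankOneP_le _ _ _).trans (key i)
    · calc ‖(rkFam n ξ η).Tm x‖
          = ‖∑ i, rankOneM P Q x (ξ i x) (η i x)‖ := rfl
        _ ≤ ∑ i, ‖rankOneM P Q x (ξ i x) (η i x)‖ := norm_sum_le _ _
        _ ≤ ∑ i : Fin n, (‖η i x₀‖ + 1) * (‖ξ i x₀‖ + 1) :=
            Finset.sum_le_sum fun i _ => (norm_rankOneM_le _ _ _).trans (key i)

theorem rkFam_isCompactOp {n : ℕ} {ξ : Fin n → ∀ x, P.Em x} {η : Fin n → ∀ x, Q.Ep x}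
    (hξ : ∀ i, ξ i ∈ P.Fm.Γ₀) (hη : ∀ i, η i ∈ Q.Fp.Γ₀) :
    IsCompactOp (rkFam n ξ η) := by
  intro ε hε
  refine ⟨n, ξ, η, hξ, hη, fun x => ?_⟩
  constructor <;> · simp only [rkFam, sub_self, norm_zero]; exact hε.le

end AuxOps

section AuxFam

variable {X : Type u} [TopologicalSpace X] {𝔅 : BanachAlgFieldB.{u, v} X}
  {P Q : BanachPairB 𝔅}

/-- Pointwise scalar multiple of an operator family by a scalar function. -/
def smulFam (φ : X → ℂ) (S : OpFamily P Q) : OpFamily P Q :=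
  ⟨fun x => φ x • S.Tp x, fun x => φ x • S.Tm x⟩

set_option maxHeartbeats 1000000 in
theorem smulFam_isLin {φ : X → ℂ} (hφ : Continuous φ) {S : OpFamily P Q}
    (hS : S.IsLin) : (smulFam φ S).IsLin := by
  constructor
  · intro x e a
    simp only [smulFam, ContinuousLinearMap.smul_apply, hS.map_rsmul, map_smul]
  · intro x a f
    simp only [smulFam, ContinuousLinearMap.smul_apply, hS.map_lsmul, map_smul]
  · intro x f e
    simp only [smulFam, ContinuousLinearMap.smul_apply, map_smul, hS.adjoint]
  · intro γ hγ
    exact Q.Fp.contSMul_mem hφ (hS.maps_sections_p γ hγ)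
  · intro γ hγ
    exact P.Fm.contSMul_mem hφ (hS.maps_sections_m γ hγ)
  · intro x₀
    obtain ⟨U, hU, C, hC⟩ := hS.locally_bounded x₀
    have hev : ∀ᶠ x in nhds x₀, ‖φ x‖ < ‖φ x₀‖ + 1 :=
      (hφ.norm.continuousAt).eventually_lt_const (by linarith)
    obtain ⟨V, hV, hVev⟩ := Filter.eventually_iff_exists_mem.mp hev
    refine ⟨U ∩ V, Filter.inter_mem hU hV, (‖φ x₀‖ + 1) * max C 0, fun x hx => ?_⟩
    have h1 : ‖φ x‖ ≤ ‖φ x₀‖ + 1 := (hVev x hx.2).le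
    constructor
    · calc ‖(smulFam φ S).Tp x‖ = ‖φ x‖ * ‖S.Tp x‖ := norm_smul (φ x) (S.Tp x)
        _ ≤ (‖φ x₀‖ + 1) * max C 0 :=
          mul_le_mul h1 ((hC x hx.1).1.trans (le_max_left _ _)) (norm_nonneg _)
            (by positivity)
    · calc ‖(smulFam φ S).Tm x‖ = ‖φ x‖ * ‖S.Tm x‖ := norm_smul (φ x) (S.Tm x)
        _ ≤ (‖φ x₀‖ + 1) * max C 0 :=
          mul_le_mul h1 ((hC x hx.1).2.trans (le_max_left _ _)) (norm_nonneg _)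
            (by positivity)

set_option maxHeartbeats 1000000 in
theorem smulFam_isCompactOp {φ : X → ℂ} (hφ : Continuous φ) {M : ℝ}
    (hφM : ∀ x, ‖φ x‖ ≤ M) {S : OpFamily P Q} (hS : IsCompactOp S) :
    IsCompactOp (smulFam φ S) := by
  intro ε hε
  set M' : ℝ := max M 0 + 1 with hM'def
  have hM' : 0 < M' := by positivity
  have hφM' : ∀ x, ‖φ x‖ ≤ M' := fun x =>
    (hφM x).trans (by simp [hM'def]; linarith [le_max_left M (0:ℝ)])
  obtain ⟨n, ξ, η, hξ, hη, hap⟩ := hS (ε / M') (div_pos hε hM')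
  refine ⟨n, ξ, fun i => fun x => φ x • η i x, hξ,
    fun i => Q.Fp.contSMul_mem_Γ₀ hφ hφM' (hη i), fun x => ?_⟩
  have hsum : ∀ x : X,
      (∑ i, rankOneP P Q x (ξ i x) (φ x • η i x)) = φ x • ∑ i, rankOneP P Q x (ξ i x) (η i x) := by
    intro x
    rw [Finset.smul_sum]
    exact Finset.sum_congr rfl fun i _ => rankOneP_smul x (ξ i x) (φ x) (η i x)
  have hsum' : ∀ x : X,
      (∑ i, rankOneM P Q x (ξ i x) (φ x • η i x)) = φ x • ∑ i, rankOneM P Q x (ξ i x) (η i x) := by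
    intro x
    rw [Finset.smul_sum]
    exact Finset.sum_congr rfl fun i _ => rankOneM_smul x (ξ i x) (φ x) (η i x)
  constructor
  · show ‖(smulFam φ S).Tp x - ∑ i, rankOneP P Q x (ξ i x) (φ x • η i x)‖ ≤ ε
    have e1 : (smulFam φ S).Tp x - ∑ i, rankOneP P Q x (ξ i x) (φ x • η i x)
        = φ x • (S.Tp x - ∑ i, rankOneP P Q x (ξ i x) (η i x)) := by
      rw [hsum x, smul_sub]; rfl
    rw [e1]
    calc ‖φ x • (S.Tp x - ∑ i, rankOneP P Q x (ξ i x) (η i x))‖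
          = ‖φ x‖ * ‖S.Tp x - ∑ i, rankOneP P Q x (ξ i x) (η i x)‖ :=
            norm_smul (φ x) (S.Tp x - ∑ i, rankOneP P Q x (ξ i x) (η i x))
      _ ≤ M' * (ε / M') := mul_le_mul (hφM' x) (hap x).1 (norm_nonneg _) hM'.le
      _ = ε := mul_div_cancel₀ ε hM'.ne'
  · show ‖(smulFam φ S).Tm x - ∑ i, rankOneM P Q x (ξ i x) (φ x • η i x)‖ ≤ ε
    have e1 : (smulFam φ S).Tm x - ∑ i, rankOneM P Q x (ξ i x) (φ x • η i x)
        = φ x • (S.Tm x - ∑ i, rankOneM P Q x (ξ i x) (η i x)) := by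
      rw [hsum' x, smul_sub]; rfl
    rw [e1]
    calc ‖φ x • (S.Tm x - ∑ i, rankOneM P Q x (ξ i x) (η i x))‖
          = ‖φ x‖ * ‖S.Tm x - ∑ i, rankOneM P Q x (ξ i x) (η i x)‖ :=
            norm_smul (φ x) (S.Tm x - ∑ i, rankOneM P Q x (ξ i x) (η i x))
      _ ≤ M' * (ε / M') := mul_le_mul (hφM' x) (hap x).2 (norm_nonneg _) hM'.le
      _ = ε := mul_div_cancel₀ ε hM'.ne'

/-- Pointwise sum of a finite family of operator families. -/
def sumFam {m : ℕ} (f : Fin m → OpFamily P Q) : OpFamily P Q :=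
  ⟨fun x => ∑ j, (f j).Tp x, fun x => ∑ j, (f j).Tm x⟩

theorem sumFam_isLin {m : ℕ} {f : Fin m → OpFamily P Q}
    (hf : ∀ j, (f j).IsLin) : (sumFam f).IsLin := by
  constructor
  · intro x e a
    simp only [sumFam, ContinuousLinearMap.sum_apply, map_sum]
    exact Finset.sum_congr rfl fun j _ => (hf j).map_rsmul x e a
  · intro x a γ
    simp only [sumFam, ContinuousLinearMap.sum_apply, map_sum]
    exact Finset.sum_congr rfl fun j _ => (hf j).map_lsmul x a γ
  · intro x γ e
    simp only [sumFam, ContinuousLinearMap.sum_apply, map_sum]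
    exact Finset.sum_congr rfl fun j _ => (hf j).adjoint x γ e
  · intro γ hγ
    have : (fun x => (sumFam f).Tp x (γ x)) = fun x => ∑ j, (f j).Tp x (γ x) := by
      funext x; simp [sumFam]
    rw [this]
    exact Q.Fp.finsum_mem _ _ fun j _ => (hf j).maps_sections_p γ hγ
  · intro γ hγ
    have : (fun x => (sumFam f).Tm x (γ x)) = fun x => ∑ j, (f j).Tm x (γ x) := by
      funext x; simp [sumFam]
    rw [this]
    exact P.Fm.finsum_mem _ _ fun j _ => (hf j).maps_sections_m γ hγ
  · intro x₀
    have h : ∀ j : Fin m, ∃ C : ℝ, ∀ᶠ x in nhds x₀, ‖(f j).Tp x‖ ≤ C ∧ ‖(f j).Tm x‖ ≤ C := by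
      intro j
      obtain ⟨U, hU, C, hC⟩ := (hf j).locally_bounded x₀
      exact ⟨C, Filter.eventually_iff_exists_mem.mpr ⟨U, hU, hC⟩⟩
    choose C hC using h
    have hev : ∀ᶠ x in nhds x₀, ∀ j, ‖(f j).Tp x‖ ≤ C j ∧ ‖(f j).Tm x‖ ≤ C j :=
      Filter.eventually_all.mpr hC
    obtain ⟨U, hU, hUev⟩ := Filter.eventually_iff_exists_mem.mp hev
    refine ⟨U, hU, ∑ j, max (C j) 0, fun x hx => ?_⟩
    constructor
    · calc ‖(sumFam f).Tp x‖ = ‖∑ j, (f j).Tp x‖ := rfl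
        _ ≤ ∑ j, ‖(f j).Tp x‖ := norm_sum_le _ _
        _ ≤ ∑ j, max (C j) 0 :=
            Finset.sum_le_sum fun j _ => (hUev x hx j).1.trans (le_max_left _ _)
    · calc ‖(sumFam f).Tm x‖ = ‖∑ j, (f j).Tm x‖ := rfl
        _ ≤ ∑ j, ‖(f j).Tm x‖ := norm_sum_le _ _
        _ ≤ ∑ j, max (C j) 0 :=
            Finset.sum_le_sum fun j _ => (hUev x hx j).2.trans (le_max_left _ _)

end AuxFam

section AuxSum

variable {X : Type u} [TopologicalSpace X] {𝔅 : BanachAlgFieldB.{u, v} X}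
  {P Q : BanachPairB 𝔅}

set_option maxHeartbeats 1000000 in
theorem isCompactOp_add {S₁ S₂ : OpFamily P Q} (h₁ : IsCompactOp S₁) (h₂ : IsCompactOp S₂) :
    IsCompactOp (⟨fun x => S₁.Tp x + S₂.Tp x, fun x => S₁.Tm x + S₂.Tm x⟩ : OpFamily P Q) := by
  intro ε hε
  obtain ⟨n₁, ξ₁, η₁, hξ₁, hη₁, hap₁⟩ := h₁ (ε / 2) (half_pos hε)
  obtain ⟨n₂, ξ₂, η₂, hξ₂, hη₂, hap₂⟩ := h₂ (ε / 2) (half_pos hε)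
  refine ⟨n₁ + n₂, Fin.append ξ₁ ξ₂, Fin.append η₁ η₂, ?_, ?_, fun x => ?_⟩
  · intro i
    refine Fin.addCases (fun j => ?_) (fun j => ?_) i
    · rw [Fin.append_left]; exact hξ₁ j
    · rw [Fin.append_right]; exact hξ₂ j
  · intro i
    refine Fin.addCases (fun j => ?_) (fun j => ?_) i
    · rw [Fin.append_left]; exact hη₁ j
    · rw [Fin.append_right]; exact hη₂ j
  · have e1 : (∑ i : Fin (n₁ + n₂),
        rankOneP P Q x (Fin.append ξ₁ ξ₂ i x) (Fin.append η₁ η₂ i x))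
        = (∑ i, rankOneP P Q x (ξ₁ i x) (η₁ i x))
          + ∑ i, rankOneP P Q x (ξ₂ i x) (η₂ i x) := by
      rw [Fin.sum_univ_add]
      congr 1
      · exact Finset.sum_congr rfl fun j _ => by simp only [Fin.append_left]
      · exact Finset.sum_congr rfl fun j _ => by simp only [Fin.append_right]
    have e2 : (∑ i : Fin (n₁ + n₂),
        rankOneM P Q x (Fin.append ξ₁ ξ₂ i x) (Fin.append η₁ η₂ i x))
        = (∑ i, rankOneM P Q x (ξ₁ i x) (η₁ i x))
          + ∑ i, rankOneM P Q x (ξ₂ i x) (η₂ i x) := by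
      rw [Fin.sum_univ_add]
      congr 1
      · exact Finset.sum_congr rfl fun j _ => by simp only [Fin.append_left]
      · exact Finset.sum_congr rfl fun j _ => by simp only [Fin.append_right]
    constructor
    · show ‖(S₁.Tp x + S₂.Tp x) - ∑ i : Fin (n₁ + n₂),
          rankOneP P Q x (Fin.append ξ₁ ξ₂ i x) (Fin.append η₁ η₂ i x)‖ ≤ ε
      rw [e1, add_sub_add_comm]
      calc ‖(S₁.Tp x - ∑ i, rankOneP P Q x (ξ₁ i x) (η₁ i x))
            + (S₂.Tp x - ∑ i, rankOneP P Q x (ξ₂ i x) (η₂ i x))‖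
          ≤ ‖S₁.Tp x - ∑ i, rankOneP P Q x (ξ₁ i x) (η₁ i x)‖
            + ‖S₂.Tp x - ∑ i, rankOneP P Q x (ξ₂ i x) (η₂ i x)‖ := norm_add_le _ _
        _ ≤ ε / 2 + ε / 2 := add_le_add (hap₁ x).1 (hap₂ x).1
        _ = ε := by ring
    · show ‖(S₁.Tm x + S₂.Tm x) - ∑ i : Fin (n₁ + n₂),
          rankOneM P Q x (Fin.append ξ₁ ξ₂ i x) (Fin.append η₁ η₂ i x)‖ ≤ ε
      rw [e2, add_sub_add_comm]
      calc ‖(S₁.Tm x - ∑ i, rankOneM P Q x (ξ₁ i x) (η₁ i x))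
            + (S₂.Tm x - ∑ i, rankOneM P Q x (ξ₂ i x) (η₂ i x))‖
          ≤ ‖S₁.Tm x - ∑ i, rankOneM P Q x (ξ₁ i x) (η₁ i x)‖
            + ‖S₂.Tm x - ∑ i, rankOneM P Q x (ξ₂ i x) (η₂ i x)‖ := norm_add_le _ _
        _ ≤ ε / 2 + ε / 2 := add_le_add (hap₁ x).2 (hap₂ x).2
        _ = ε := by ring

set_option maxHeartbeats 1000000 in
theorem sumFam_isCompactOp {m : ℕ} {f : Fin m → OpFamily P Q}
    (hf : ∀ j, IsCompactOp (f j)) : IsCompactOp (sumFam f) := by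
  induction m with
  | zero =>
    intro ε hε
    refine ⟨0, Fin.elim0, Fin.elim0, (fun i => i.elim0), (fun i => i.elim0), fun x => ?_⟩
    constructor <;> · simpa [sumFam] using hε.le
  | succ m ih =>
    have hadd := isCompactOp_add (hf 0) (ih (f := fun j => f j.succ) (fun j => hf j.succ))
    have heq : sumFam f = (⟨fun x => (f 0).Tp x + (sumFam fun j => f j.succ).Tp x,
        fun x => (f 0).Tm x + (sumFam fun j => f j.succ).Tm x⟩ : OpFamily P Q) := by
      simp only [sumFam, Fin.sum_univ_succ]
    rw [heq]
    exact hadd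

end AuxSum

section Statement4

variable {X : Type u} [TopologicalSpace X]

set_option maxHeartbeats 2000000 in
/-- **Characterisation of locally compact operators.**  Let `X` be a locally compact
Hausdorff space, `B` a u.s.c. field of Banach algebras over `X`, `E` and `F` Banach
`B`-pairs and `T` a continuous field of `B`-linear operators from `E` to `F`.  Then the
following are equivalent:
1. `T` is locally compact;
2. on every compact subset, `T` is uniformly approximable by finite sums of rank-one
   operators built from sections;
3. near every point, `T` is uniformly approximable by compact operators;
4. on every compact subset, `T` is uniformly approximable by compact operators;
5. `φ T` is compact for every `φ ∈ C_c(X)`. -/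
theorem locally_compact_operator_characterisation
    [LocallyCompactSpace X] [T2Space X]
    {𝔅 : BanachAlgFieldB.{u, v} X} {P Q : BanachPairB 𝔅}
    (T : OpFamily P Q) (hT : T.IsLin) :
    List.TFAE
      [ -- (1)
        IsLocallyCompactOp T,
        -- (2)
        (∀ K : Set X, IsCompact K → ∀ ε : ℝ, 0 < ε → ∃ n : ℕ,
          ∃ ξ : Fin n → ∀ x, P.Em x, ∃ η : Fin n → ∀ x, Q.Ep x,
            (∀ i, ξ i ∈ P.Fm.Γ) ∧ (∀ i, η i ∈ Q.Fp.Γ) ∧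
            ∀ k ∈ K, ‖T.Tp k - ∑ i, rankOneP P Q k (ξ i k) (η i k)‖ ≤ ε ∧
                     ‖T.Tm k - ∑ i, rankOneM P Q k (ξ i k) (η i k)‖ ≤ ε),
        -- (3)
        (∀ (x₀ : X) (ε : ℝ), 0 < ε → ∃ U ∈ nhds x₀, ∃ S : OpFamily P Q,
          S.IsLin ∧ IsCompactOp S ∧
          ∀ u ∈ U, ‖T.Tp u - S.Tp u‖ ≤ ε ∧ ‖T.Tm u - S.Tm u‖ ≤ ε),
        -- (4)
        (∀ K : Set X, IsCompact K → ∀ ε : ℝ, 0 < ε → ∃ S : OpFamily P Q,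
          S.IsLin ∧ IsCompactOp S ∧
          ∀ k ∈ K, ‖T.Tp k - S.Tp k‖ ≤ ε ∧ ‖T.Tm k - S.Tm k‖ ≤ ε),
        -- (5)
        (∀ φ : C(X, ℂ), HasCompactSupport φ →
          IsCompactOp (⟨fun x => φ x • T.Tp x, fun x => φ x • T.Tm x⟩ : OpFamily P Q)) ] := by
  tfae_have 2 → 1 := by
    intro h2 x₀ ε hε
    obtain ⟨K, hKc, hKn⟩ := exists_compact_mem_nhds x₀
    obtain ⟨n, ξ, η, hξ, hη, h⟩ := h2 K hKc ε hε
    exact ⟨K, hKn, n, ξ, η, hξ, hη, h⟩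
  tfae_have 4 → 2 := by
    intro h4 K hK ε hε
    obtain ⟨S, _, hScomp, hST⟩ := h4 K hK (ε / 2) (half_pos hε)
    obtain ⟨n, ξ, η, hξ, hη, hap⟩ := hScomp (ε / 2) (half_pos hε)
    refine ⟨n, ξ, η, fun i => (hξ i).1, fun i => (hη i).1, fun k hk => ?_⟩
    constructor
    · calc ‖T.Tp k - ∑ i, rankOneP P Q k (ξ i k) (η i k)‖
          = ‖(T.Tp k - S.Tp k) + (S.Tp k - ∑ i, rankOneP P Q k (ξ i k) (η i k))‖ := by
            rw [sub_add_sub_cancel]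
        _ ≤ ‖T.Tp k - S.Tp k‖ + ‖S.Tp k - ∑ i, rankOneP P Q k (ξ i k) (η i k)‖ :=
            norm_add_le _ _
        _ ≤ ε / 2 + ε / 2 := add_le_add (hST k hk).1 (hap k).1
        _ = ε := by ring
    · calc ‖T.Tm k - ∑ i, rankOneM P Q k (ξ i k) (η i k)‖
          = ‖(T.Tm k - S.Tm k) + (S.Tm k - ∑ i, rankOneM P Q k (ξ i k) (η i k))‖ := by
            rw [sub_add_sub_cancel]
        _ ≤ ‖T.Tm k - S.Tm k‖ + ‖S.Tm k - ∑ i, rankOneM P Q k (ξ i k) (η i k)‖ :=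
            norm_add_le _ _
        _ ≤ ε / 2 + ε / 2 := add_le_add (hST k hk).2 (hap k).2
        _ = ε := by ring
  tfae_have 1 → 3 := by
    intro h1 x₀ ε hε
    obtain ⟨U, hU, n, ξ, η, hξ, hη, hap⟩ := h1 x₀ ε hε
    obtain ⟨K, hKn, hKU, hKc⟩ := LocallyCompactSpace.local_compact_nhds x₀ U hU
    obtain ⟨φ, hφ1, -, hφc, -⟩ :=
      exists_continuous_one_zero_of_isCompact hKc isClosed_empty (Set.disjoint_empty K)
    have hψcont : Continuous fun x => ((φ x : ℝ) : ℂ) :=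
      Complex.continuous_ofReal.comp φ.continuous
    have hψc : HasCompactSupport fun x => ((φ x : ℝ) : ℂ) :=
      hφc.comp_left (g := Complex.ofReal) Complex.ofReal_zero
    refine ⟨K, hKn,
      rkFam n (fun i x => ((φ x : ℝ) : ℂ) • ξ i x) (fun i x => ((φ x : ℝ) : ℂ) • η i x),
      rkFam_isLin (fun i => P.Fm.contSMul_mem hψcont (hξ i))
        (fun i => Q.Fp.contSMul_mem hψcont (hη i)),
      rkFam_isCompactOp
        (fun i => P.Fm.contSMul_mem_Γ₀_of_compactSupport hψcont hψc (hξ i))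
        (fun i => Q.Fp.contSMul_mem_Γ₀_of_compactSupport hψcont hψc (hη i)),
      fun u hu => ?_⟩
    have h1' : ((φ u : ℝ) : ℂ) = 1 := by simp [hφ1 hu]
    constructor
    · have e1 : (rkFam n (fun i x => ((φ x : ℝ) : ℂ) • ξ i x)
          (fun i x => ((φ x : ℝ) : ℂ) • η i x)).Tp u
          = ∑ i, rankOneP P Q u (ξ i u) (η i u) := by
        show (∑ i, rankOneP P Q u (((φ u : ℝ) : ℂ) • ξ i u) (((φ u : ℝ) : ℂ) • η i u)) = _
        exact Finset.sum_congr rfl fun i _ => by rw [h1', one_smul, one_smul]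
      rw [e1]
      exact (hap u (hKU hu)).1
    · have e2 : (rkFam n (fun i x => ((φ x : ℝ) : ℂ) • ξ i x)
          (fun i x => ((φ x : ℝ) : ℂ) • η i x)).Tm u
          = ∑ i, rankOneM P Q u (ξ i u) (η i u) := by
        show (∑ i, rankOneM P Q u (((φ u : ℝ) : ℂ) • ξ i u) (((φ u : ℝ) : ℂ) • η i u)) = _
        exact Finset.sum_congr rfl fun i _ => by rw [h1', one_smul, one_smul]
      rw [e2]
      exact (hap u (hKU hu)).2
  tfae_have 3 → 4 := by
    intro h3 K hK ε hε
    have hx : ∀ x : X, ∃ V : Set X, IsOpen V ∧ x ∈ V ∧ ∃ S : OpFamily P Q,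
        S.IsLin ∧ IsCompactOp S ∧
        ∀ u ∈ V, ‖T.Tp u - S.Tp u‖ ≤ ε ∧ ‖T.Tm u - S.Tm u‖ ≤ ε := by
      intro x
      obtain ⟨U, hU, S, hS1, hS2, hS3⟩ := h3 x ε hε
      obtain ⟨V, hVU, hVo, hxV⟩ := mem_nhds_iff.mp hU
      exact ⟨V, hVo, hxV, S, hS1, hS2, fun u hu => hS3 u (hVU hu)⟩
    choose V hVo hxV S hSlin hScomp hSap using hx
    obtain ⟨t, ht⟩ := hK.elim_finite_subcover V hVo
      (fun x hx' => Set.mem_iUnion.mpr ⟨x, hxV x⟩)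
    set l := t.toList with hl
    have hcover : K ⊆ ⋃ j : Fin l.length, V (l.get j) := by
      intro x hx'
      obtain ⟨y, hyt, hyV⟩ := Set.mem_iUnion₂.mp (ht hx')
      obtain ⟨j, hj⟩ := List.mem_iff_get.mp (Finset.mem_toList.mpr hyt)
      exact Set.mem_iUnion.mpr ⟨j, by rw [hj]; exact hyV⟩
    obtain ⟨g, hgsub, hgsum, hgIcc, hgcs⟩ :=
      exists_continuous_sum_one_of_isOpen_isCompact
        (fun j : Fin l.length => hVo (l.get j)) hK hcover
    have hcont : ∀ j : Fin l.length, Continuous fun x => ((g j x : ℝ) : ℂ) := fun j =>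
      Complex.continuous_ofReal.comp (g j).continuous
    have hbnd : ∀ (j : Fin l.length) (x : X), ‖((g j x : ℝ) : ℂ)‖ ≤ 1 := by
      intro j x
      rw [Complex.norm_real, Real.norm_eq_abs]
      exact abs_le.mpr ⟨by linarith [(hgIcc j x).1], (hgIcc j x).2⟩
    set Sfin : Fin l.length → OpFamily P Q := fun j =>
      smulFam (fun x => ((g j x : ℝ) : ℂ)) (S (l.get j)) with hSfin
    refine ⟨sumFam Sfin,
      sumFam_isLin (fun j => smulFam_isLin (hcont j) (hSlin _)),
      sumFam_isCompactOp (fun j => smulFam_isCompactOp (hcont j) (hbnd j) (hScomp _)),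
      fun k hk => ?_⟩
    have hsum1 : ∑ j : Fin l.length, g j k = 1 := by simpa using hgsum hk
    have hsum1' : (∑ j : Fin l.length, ((g j k : ℝ) : ℂ)) = 1 := by exact_mod_cast hsum1
    constructor
    · have keyP : T.Tp k - (sumFam Sfin).Tp k
          = ∑ j, ((g j k : ℝ) : ℂ) • (T.Tp k - (S (l.get j)).Tp k) := by
        have h1 : (sumFam Sfin).Tp k
            = ∑ j, ((g j k : ℝ) : ℂ) • (S (l.get j)).Tp k := rfl
        have h2 : T.Tp k = ∑ j : Fin l.length, ((g j k : ℝ) : ℂ) • T.Tp k := by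
          rw [← Finset.sum_smul, hsum1', one_smul]
        calc T.Tp k - (sumFam Sfin).Tp k
            = (∑ j : Fin l.length, ((g j k : ℝ) : ℂ) • T.Tp k)
              - ∑ j, ((g j k : ℝ) : ℂ) • (S (l.get j)).Tp k := by rw [← h2, h1]
          _ = ∑ j, (((g j k : ℝ) : ℂ) • T.Tp k
              - ((g j k : ℝ) : ℂ) • (S (l.get j)).Tp k) := by
              rw [Finset.sum_sub_distrib]
          _ = ∑ j, ((g j k : ℝ) : ℂ) • (T.Tp k - (S (l.get j)).Tp k) :=
              Finset.sum_congr rfl fun j _ => (smul_sub _ _ _).symm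
      have hbound : ∀ j : Fin l.length,
          ‖((g j k : ℝ) : ℂ) • (T.Tp k - (S (l.get j)).Tp k)‖ ≤ g j k * ε := by
        intro j
        rw [norm_smul (((g j k : ℝ)) : ℂ) (T.Tp k - (S (l.get j)).Tp k),
          Complex.norm_real, Real.norm_of_nonneg (hgIcc j k).1]
        by_cases h0 : g j k = 0
        · simp [h0]
        · have hk' : k ∈ V (l.get j) :=
            hgsub j (subset_closure (Function.mem_support.mpr h0))
          exact mul_le_mul_of_nonneg_left (hSap (l.get j) k hk').1 (hgIcc j k).1
      rw [keyP]
      calc ‖∑ j, ((g j k : ℝ) : ℂ) • (T.Tp k - (S (l.get j)).Tp k)‖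
          ≤ ∑ j, ‖((g j k : ℝ) : ℂ) • (T.Tp k - (S (l.get j)).Tp k)‖ := norm_sum_le _ _
        _ ≤ ∑ j, g j k * ε := Finset.sum_le_sum fun j _ => hbound j
        _ = (∑ j : Fin l.length, g j k) * ε := (Finset.sum_mul _ _ _).symm
        _ = ε := by rw [hsum1, one_mul]
    · have keyM : T.Tm k - (sumFam Sfin).Tm k
          = ∑ j, ((g j k : ℝ) : ℂ) • (T.Tm k - (S (l.get j)).Tm k) := by
        have h1 : (sumFam Sfin).Tm k
            = ∑ j, ((g j k : ℝ) : ℂ) • (S (l.get j)).Tm k := rfl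
        have h2 : T.Tm k = ∑ j : Fin l.length, ((g j k : ℝ) : ℂ) • T.Tm k := by
          rw [← Finset.sum_smul, hsum1', one_smul]
        calc T.Tm k - (sumFam Sfin).Tm k
            = (∑ j : Fin l.length, ((g j k : ℝ) : ℂ) • T.Tm k)
              - ∑ j, ((g j k : ℝ) : ℂ) • (S (l.get j)).Tm k := by rw [← h2, h1]
          _ = ∑ j, (((g j k : ℝ) : ℂ) • T.Tm k
              - ((g j k : ℝ) : ℂ) • (S (l.get j)).Tm k) := by
              rw [Finset.sum_sub_distrib]
          _ = ∑ j, ((g j k : ℝ) : ℂ) • (T.Tm k - (S (l.get j)).Tm k) :=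
              Finset.sum_congr rfl fun j _ => (smul_sub _ _ _).symm
      have hbound : ∀ j : Fin l.length,
          ‖((g j k : ℝ) : ℂ) • (T.Tm k - (S (l.get j)).Tm k)‖ ≤ g j k * ε := by
        intro j
        rw [norm_smul (((g j k : ℝ)) : ℂ) (T.Tm k - (S (l.get j)).Tm k),
          Complex.norm_real, Real.norm_of_nonneg (hgIcc j k).1]
        by_cases h0 : g j k = 0
        · simp [h0]
        · have hk' : k ∈ V (l.get j) :=
            hgsub j (subset_closure (Function.mem_support.mpr h0))
          exact mul_le_mul_of_nonneg_left (hSap (l.get j) k hk').2 (hgIcc j k).1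
      rw [keyM]
      calc ‖∑ j, ((g j k : ℝ) : ℂ) • (T.Tm k - (S (l.get j)).Tm k)‖
          ≤ ∑ j, ‖((g j k : ℝ) : ℂ) • (T.Tm k - (S (l.get j)).Tm k)‖ := norm_sum_le _ _
        _ ≤ ∑ j, g j k * ε := Finset.sum_le_sum fun j _ => hbound j
        _ = (∑ j : Fin l.length, g j k) * ε := (Finset.sum_mul _ _ _).symm
        _ = ε := by rw [hsum1, one_mul]
  tfae_have 4 → 5 := by
    intro h4 φ hφc
    cases isEmpty_or_nonempty X with
    | inl hempty =>
      intro ε hε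
      exact ⟨0, Fin.elim0, Fin.elim0, (fun i => i.elim0), (fun i => i.elim0),
        fun x => (IsEmpty.false x).elim⟩
    | inr hne =>
      obtain ⟨x₀, hx₀⟩ :=
        (φ.continuous.norm).exists_forall_ge_of_hasCompactSupport hφc.norm
      have hMpos : (0 : ℝ) < ‖φ x₀‖ + 1 := by positivity
      set M : ℝ := ‖φ x₀‖ + 1 with hM
      have hφM : ∀ x, ‖φ x‖ ≤ M := fun x => (hx₀ x).trans (by rw [hM]; linarith)
      intro ε hε
      have hεM : 0 < ε / (2 * M) := div_pos hε (by positivity)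
      obtain ⟨S, hSlin, hScomp, hap⟩ := h4 (tsupport φ) hφc (ε / (2 * M)) hεM
      obtain ⟨n, ξ, η, hξ, hη, hrk⟩ := hScomp (ε / (2 * M)) hεM
      have hhalf : M * (ε / (2 * M)) = ε / 2 := by
        field_simp
      refine ⟨n, ξ, fun i x => φ x • η i x, hξ,
        fun i => Q.Fp.contSMul_mem_Γ₀ φ.continuous hφM (hη i), fun x => ?_⟩
      constructor
      · show ‖φ x • T.Tp x - ∑ i, rankOneP P Q x (ξ i x) (φ x • η i x)‖ ≤ ε
        have hsumP : (∑ i, rankOneP P Q x (ξ i x) (φ x • η i x))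
            = φ x • ∑ i, rankOneP P Q x (ξ i x) (η i x) := by
          rw [Finset.smul_sum]
          exact Finset.sum_congr rfl fun i _ => rankOneP_smul x (ξ i x) (φ x) (η i x)
        have hTS : ‖φ x • T.Tp x - φ x • S.Tp x‖ ≤ ε / 2 := by
          by_cases hx : x ∈ tsupport φ
          · calc ‖φ x • T.Tp x - φ x • S.Tp x‖
                = ‖φ x • (T.Tp x - S.Tp x)‖ := by rw [smul_sub]
              _ = ‖φ x‖ * ‖T.Tp x - S.Tp x‖ := norm_smul (φ x) (T.Tp x - S.Tp x)
              _ ≤ M * (ε / (2 * M)) :=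
                  mul_le_mul (hφM x) (hap x hx).1 (norm_nonneg _) hMpos.le
              _ = ε / 2 := hhalf
          · rw [image_eq_zero_of_notMem_tsupport hx]
            simp
            positivity
        have hSR : ‖φ x • S.Tp x - φ x • ∑ i, rankOneP P Q x (ξ i x) (η i x)‖ ≤ ε / 2 := by
          calc ‖φ x • S.Tp x - φ x • ∑ i, rankOneP P Q x (ξ i x) (η i x)‖
              = ‖φ x • (S.Tp x - ∑ i, rankOneP P Q x (ξ i x) (η i x))‖ := by rw [smul_sub]
            _ = ‖φ x‖ * ‖S.Tp x - ∑ i, rankOneP P Q x (ξ i x) (η i x)‖ :=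
                norm_smul (φ x) (S.Tp x - ∑ i, rankOneP P Q x (ξ i x) (η i x))
            _ ≤ M * (ε / (2 * M)) :=
                mul_le_mul (hφM x) (hrk x).1 (norm_nonneg _) hMpos.le
            _ = ε / 2 := hhalf
        rw [hsumP]
        calc ‖φ x • T.Tp x - φ x • ∑ i, rankOneP P Q x (ξ i x) (η i x)‖
            = ‖(φ x • T.Tp x - φ x • S.Tp x)
              + (φ x • S.Tp x - φ x • ∑ i, rankOneP P Q x (ξ i x) (η i x))‖ := by
              rw [sub_add_sub_cancel]
          _ ≤ ‖φ x • T.Tp x - φ x • S.Tp x‖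
              + ‖φ x • S.Tp x - φ x • ∑ i, rankOneP P Q x (ξ i x) (η i x)‖ := norm_add_le _ _
          _ ≤ ε / 2 + ε / 2 := add_le_add hTS hSR
          _ = ε := by ring
      · show ‖φ x • T.Tm x - ∑ i, rankOneM P Q x (ξ i x) (φ x • η i x)‖ ≤ ε
        have hsumM : (∑ i, rankOneM P Q x (ξ i x) (φ x • η i x))
            = φ x • ∑ i, rankOneM P Q x (ξ i x) (η i x) := by
          rw [Finset.smul_sum]
          exact Finset.sum_congr rfl fun i _ => rankOneM_smul x (ξ i x) (φ x) (η i x)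
        have hTS : ‖φ x • T.Tm x - φ x • S.Tm x‖ ≤ ε / 2 := by
          by_cases hx : x ∈ tsupport φ
          · calc ‖φ x • T.Tm x - φ x • S.Tm x‖
                = ‖φ x • (T.Tm x - S.Tm x)‖ := by rw [smul_sub]
              _ = ‖φ x‖ * ‖T.Tm x - S.Tm x‖ := norm_smul (φ x) (T.Tm x - S.Tm x)
              _ ≤ M * (ε / (2 * M)) :=
                  mul_le_mul (hφM x) (hap x hx).2 (norm_nonneg _) hMpos.le
              _ = ε / 2 := hhalf
          · rw [image_eq_zero_of_notMem_tsupport hx]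
            simp
            positivity
        have hSR : ‖φ x • S.Tm x - φ x • ∑ i, rankOneM P Q x (ξ i x) (η i x)‖ ≤ ε / 2 := by
          calc ‖φ x • S.Tm x - φ x • ∑ i, rankOneM P Q x (ξ i x) (η i x)‖
              = ‖φ x • (S.Tm x - ∑ i, rankOneM P Q x (ξ i x) (η i x))‖ := by rw [smul_sub]
            _ = ‖φ x‖ * ‖S.Tm x - ∑ i, rankOneM P Q x (ξ i x) (η i x)‖ :=
                norm_smul (φ x) (S.Tm x - ∑ i, rankOneM P Q x (ξ i x) (η i x))
            _ ≤ M * (ε / (2 * M)) :=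
                mul_le_mul (hφM x) (hrk x).2 (norm_nonneg _) hMpos.le
            _ = ε / 2 := hhalf
        rw [hsumM]
        calc ‖φ x • T.Tm x - φ x • ∑ i, rankOneM P Q x (ξ i x) (η i x)‖
            = ‖(φ x • T.Tm x - φ x • S.Tm x)
              + (φ x • S.Tm x - φ x • ∑ i, rankOneM P Q x (ξ i x) (η i x))‖ := by
              rw [sub_add_sub_cancel]
          _ ≤ ‖φ x • T.Tm x - φ x • S.Tm x‖
              + ‖φ x • S.Tm x - φ x • ∑ i, rankOneM P Q x (ξ i x) (η i x)‖ := norm_add_le _ _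
          _ ≤ ε / 2 + ε / 2 := add_le_add hTS hSR
          _ = ε := by ring
  tfae_have 5 → 1 := by
    intro h5 x₀ ε hε
    obtain ⟨K, hKc, hKn⟩ := exists_compact_mem_nhds x₀
    obtain ⟨φ, hφ1, -, hφc, -⟩ :=
      exists_continuous_one_zero_of_isCompact hKc isClosed_empty (Set.disjoint_empty K)
    have hψcont : Continuous fun x => ((φ x : ℝ) : ℂ) :=
      Complex.continuous_ofReal.comp φ.continuous
    have hψc : HasCompactSupport fun x => ((φ x : ℝ) : ℂ) :=
      hφc.comp_left (g := Complex.ofReal) Complex.ofReal_zero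
    obtain ⟨n, ξ, η, hξ, hη, hap⟩ := h5 ⟨fun x => ((φ x : ℝ) : ℂ), hψcont⟩ hψc ε hε
    refine ⟨K, hKn, n, ξ, η, fun i => (hξ i).1, fun i => (hη i).1, fun x hx => ?_⟩
    have h1' : ((φ x : ℝ) : ℂ) = 1 := by simp [hφ1 hx]
    constructor
    · have hp : ‖((φ x : ℝ) : ℂ) • T.Tp x - ∑ i, rankOneP P Q x (ξ i x) (η i x)‖ ≤ ε :=
        (hap x).1
      rwa [h1', one_smul] at hp
    · have hm : ‖((φ x : ℝ) : ℂ) • T.Tm x - ∑ i, rankOneM P Q x (ξ i x) (η i x)‖ ≤ ε :=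
        (hap x).2
      rwa [h1', one_smul] at hm
  tfae_finish


end Statement4
end
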